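/- arXiv:2309.02932 — 3 statements merged into one kernel-verified Lean document; each statement's English description precedes it below -/
import Mathlib

section
/- Let n ≥ 3, i ∈ [n-2], and let w = w_1w_2⋯w_n ∈ B_n with w_n = n-1, w_i = -n, {w_1,…,w_{i-1}} = {-(n-2), -(n-3), …, -(n-i)}, and {w_{i+1},…,w_{n-1}} = {-(n-i-1), …, -2, -1}. Let u ≤_L w with u_n = n-1 and u_i = -n. If k and r are positive integers such that ℓ(u) = ℓ(w) - k and r ≤ min{i, n-k-1}, then {-(n-2), -(n-3), …, -(n-r)} ⊆ {u_1, u_2, …, u_{i-1}}. -/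
/-- `w : Equiv.Perm ℤ` is the natural embedding of a signed permutation of `{±1,…,±n}`:
it anticommutes with negation and fixes every integer of absolute value greater than `n`. -/
def IsSignedPerm (n : ℕ) (w : Equiv.Perm ℤ) : Prop :=
  (∀ i : ℤ, w (-i) = -(w i)) ∧ ∀ i : ℤ, (n : ℤ) < |i| → w i = i

/-- `Neg(w)` : the set of `i ∈ [n]` with `w_i < 0`. -/
noncomputable def NegSet (n : ℕ) (w : Equiv.Perm ℤ) : Finset ℤ :=
  (Finset.Icc 1 (n : ℤ)).filter fun i => w i < 0

/-- `Inv(w)` : the set of pairs `1 ≤ i < j ≤ n` with `w_i > w_j`. -/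
noncomputable def InvSet (n : ℕ) (w : Equiv.Perm ℤ) : Finset (ℤ × ℤ) :=
  ((Finset.Icc 1 (n : ℤ)) ×ˢ (Finset.Icc 1 (n : ℤ))).filter fun p => p.1 < p.2 ∧ w p.2 < w p.1

/-- `Nsp(w)` : the set of pairs `1 ≤ i < j ≤ n` with `w_i + w_j < 0`. -/
noncomputable def NspSet (n : ℕ) (w : Equiv.Perm ℤ) : Finset (ℤ × ℤ) :=
  ((Finset.Icc 1 (n : ℤ)) ×ˢ (Finset.Icc 1 (n : ℤ))).filter fun p => p.1 < p.2 ∧ w p.1 + w p.2 < 0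

/-- The Coxeter length `ℓ(w) = #Neg(w) + #Inv(w) + #Nsp(w)` of `w ∈ B_n`. -/
noncomputable def len (n : ℕ) (w : Equiv.Perm ℤ) : ℕ :=
  (NegSet n w).card + (InvSet n w).card + (NspSet n w).card

/-- Left weak order on `B_n` : `u ≤_L w` iff `ℓ(w) = ℓ(u) + ℓ(w u⁻¹)`. -/
def leL (n : ℕ) (u w : Equiv.Perm ℤ) : Prop := len n w = len n u + len n (w * u⁻¹)

/-- Right weak order on `B_n` : `u ≤_R w` iff `ℓ(w) = ℓ(u) + ℓ(u⁻¹ w)`. -/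
def leR (n : ℕ) (u w : Equiv.Perm ℤ) : Prop := len n w = len n u + len n (u⁻¹ * w)

/-- `StsEqPat a p` : the signed standardization of the word `a` has one-line notation `p`. -/
def StsEqPat {m : ℕ} (a p : Fin m → ℤ) : Prop :=
  (∀ t, (a t < 0 ↔ p t < 0)) ∧ ∀ s t, (|a s| < |a t| ↔ |p s| < |p t|)

/-- `StEqPat a p` : the ordinary standardization of the word `a` has one-line notation `p`. -/
def StEqPat {m : ℕ} (a p : Fin m → ℤ) : Prop := ∀ s t, a s < a t ↔ p s < p t

/-- The word `a` contains the signed pattern with one-line notation `p`. -/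
def WordContainsPat {k m : ℕ} (a : Fin k → ℤ) (p : Fin m → ℤ) : Prop :=
  ∃ idx : Fin m → Fin k, StrictMono idx ∧ StsEqPat (a ∘ idx) p

/-- The word `a` contains the ordinary pattern with one-line notation `p`. -/
def WordContainsStPat {k m : ℕ} (a : Fin k → ℤ) (p : Fin m → ℤ) : Prop :=
  ∃ idx : Fin m → Fin k, StrictMono idx ∧ StEqPat (a ∘ idx) p

/-- Word-level separability in the signed sense: the word avoids the six patterns
`(-2)1, 2(-1), 3142, 2413, (-3)(-1)(-4)(-2), (-2)(-4)(-1)(-3)`. -/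
def SepWordSigned {k : ℕ} (a : Fin k → ℤ) : Prop :=
  ¬ WordContainsPat a ![-2, 1] ∧ ¬ WordContainsPat a ![2, -1] ∧
  ¬ WordContainsPat a ![3, 1, 4, 2] ∧ ¬ WordContainsPat a ![2, 4, 1, 3] ∧
  ¬ WordContainsPat a ![-3, -1, -4, -2] ∧ ¬ WordContainsPat a ![-2, -4, -1, -3]

/-- Word-level separability in the ordinary sense: the word avoids `3142` and `2413`. -/
def SepWordOrd {k : ℕ} (a : Fin k → ℤ) : Prop :=
  ¬ WordContainsStPat a ![3, 1, 4, 2] ∧ ¬ WordContainsStPat a ![2, 4, 1, 3]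

/-- The one-line notation `w_1 w_2 ⋯ w_n` of `w ∈ B_n`. -/
def oneLine (n : ℕ) (w : Equiv.Perm ℤ) : Fin n → ℤ := fun t => w ((t : ℤ) + 1)

/-- `w ∈ B_n` is separable. -/
def SepSigned (n : ℕ) (w : Equiv.Perm ℤ) : Prop := SepWordSigned (oneLine n w)

/-- `w ∈ B_n` is minimal non-separable: `w` is not separable but for every
`i ∈ {0,…,n-1}` both `sts(w_1⋯w_i)` and `st(w_{i+1}⋯w_n)` are separable. -/
def MinNonSep (n : ℕ) (w : Equiv.Perm ℤ) : Prop :=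
  ¬ SepSigned n w ∧
    ∀ i : ℕ, i ≤ n - 1 →
      SepWordSigned (fun t : Fin i => w ((t : ℤ) + 1)) ∧
      SepWordOrd (fun t : Fin (n - i) => w ((i : ℤ) + (t : ℤ) + 1))

/-- The set `B_n` of signed permutations inside `Equiv.Perm ℤ`. -/
def SignedPerms (n : ℕ) : Set (Equiv.Perm ℤ) := {w | IsSignedPerm n w}

/-- The interval `[e,w]_L` in the left weak order on `B_n`. -/
def IntervalL (n : ℕ) (w : Equiv.Perm ℤ) : Set (Equiv.Perm ℤ) :=
  {x | IsSignedPerm n x ∧ leL n x w}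

/-- The interval `[e,w]_R` in the right weak order on `B_n`. -/
def IntervalR (n : ℕ) (w : Equiv.Perm ℤ) : Set (Equiv.Perm ℤ) :=
  {x | IsSignedPerm n x ∧ leR n x w}

/-- `(X, Y)` is a splitting of `B_n` : multiplication `X × Y → B_n` is
length-additive and a bijection. -/
def IsSplitting (n : ℕ) (X Y : Set (Equiv.Perm ℤ)) : Prop :=
  (∀ x ∈ X, ∀ y ∈ Y, len n (x * y) = len n x + len n y) ∧
  Set.BijOn (fun p : Equiv.Perm ℤ × Equiv.Perm ℤ => p.1 * p.2) (X ×ˢ Y) (SignedPerms n)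

/-- The generalized quotient `B_n / U`. -/
def GenQuot (n : ℕ) (U : Set (Equiv.Perm ℤ)) : Set (Equiv.Perm ℤ) :=
  {w | IsSignedPerm n w ∧ ∀ x ∈ U, len n (w * x) = len n w + len n x}

/-- Number of elements of `[e,w]_L` of length `d`. -/
noncomputable def rankCountL (n : ℕ) (w : Equiv.Perm ℤ) (d : ℕ) : ℕ :=
  {u | u ∈ IntervalL n w ∧ len n u = d}.ncard

/-- Number of elements of `[e,w]_R` of length `d`. -/
noncomputable def rankCountR (n : ℕ) (w : Equiv.Perm ℤ) (d : ℕ) : ℕ :=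
  {u | u ∈ IntervalR n w ∧ len n u = d}.ncard

/-- Number of elements `u` with `w ≤_L u` and `ℓ(u) = ℓ(w) + d`. -/
noncomputable def rankCountUp (n : ℕ) (w : Equiv.Perm ℤ) (d : ℕ) : ℕ :=
  {u | IsSignedPerm n u ∧ leL n w u ∧ len n u = len n w + d}.ncard

/-- The simple generators of `B_n` : `sGen 0 = s_0` interchanges `1` and `-1`, and for
`j ≥ 1`, `sGen j = s_j` interchanges `j, j+1` and `-j, -(j+1)`. -/
def sGen (j : ℕ) : Equiv.Perm ℤ :=
  if j = 0 then Equiv.swap 1 (-1)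
  else Equiv.swap (j : ℤ) ((j : ℤ) + 1) * Equiv.swap (-(j : ℤ)) (-((j : ℤ) + 1))

/-- A sequence `f 0, f 1, …` is unimodal. -/
def UnimodalSeq (f : ℕ → ℕ) : Prop :=
  ∃ m, (∀ d e, d ≤ e → e ≤ m → f d ≤ f e) ∧ ∀ d e, m ≤ d → d ≤ e → f e ≤ f d

/-- The rank generating function of `[e,w]_L`. -/
noncomputable def lowerGF (n : ℕ) (w : Equiv.Perm ℤ) : Polynomial ℕ :=
  ∑ d ∈ Finset.range (len n w + 1), Polynomial.C (rankCountL n w d) * Polynomial.X ^ d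

/-- The rank generating function of `[w,w₀]_L`, shifted by `q^{-ℓ(w)}`. -/
noncomputable def upperGF (n : ℕ) (w : Equiv.Perm ℤ) : Polynomial ℕ :=
  ∑ d ∈ Finset.range (n * n + 1), Polynomial.C (rankCountUp n w d) * Polynomial.X ^ d

namespace Stmt10

variable {n : ℕ} {v u w x y : Equiv.Perm ℤ}

lemma anti_inv (hv : ∀ i : ℤ, v (-i) = -(v i)) : ∀ i : ℤ, v⁻¹ (-i) = -(v⁻¹ i) := by
  intro i
  apply v.injective
  rw [Equiv.Perm.coe_inv, Equiv.apply_symm_apply, hv, Equiv.apply_symm_apply]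

lemma isp_inv (hv : IsSignedPerm n v) : IsSignedPerm n v⁻¹ := by
  refine ⟨anti_inv hv.1, fun i hi => ?_⟩
  have h := hv.2 i hi
  calc v⁻¹ i = v⁻¹ (v i) := by rw [h]
  _ = i := v.symm_apply_apply i

lemma anti_zero (hv : ∀ i : ℤ, v (-i) = -(v i)) : v 0 = 0 := by
  have := hv 0; simp at this; omega

lemma anti_ne_zero (hv : ∀ i : ℤ, v (-i) = -(v i)) {a : ℤ} (ha : a ≠ 0) : v a ≠ 0 := by
  intro h
  exact ha (v.injective (by rw [h, anti_zero hv]))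

lemma isp_abs_le (hv : IsSignedPerm n v) {a : ℤ} (ha : |a| ≤ n) : |v a| ≤ n := by
  by_contra h
  push_neg at h
  have h2 := hv.2 (v a) h
  have h3 : v a = a := v.injective h2
  rw [h3] at h
  omega

lemma anti_abs_eq (hv : ∀ i : ℤ, v (-i) = -(v i)) {a b : ℤ} (h : |v a| = |v b|) :
    |a| = |b| := by
  rcases abs_eq_abs.mp h with h' | h'
  · rw [v.injective h']
  · have : v a = v (-b) := by rw [hv]; exact h'
    rw [v.injective this, abs_neg]

def act (v : Equiv.Perm ℤ) (p : ℤ × ℤ) : ℤ × ℤ :=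
  if |v p.2| < |v p.1| then (v p.1, v p.2) else (v p.2, v p.1)

lemma act_mul (hx : ∀ i : ℤ, x (-i) = -(x i)) (hy : ∀ i : ℤ, y (-i) = -(y i))
    {p : ℤ × ℤ} (hp : |p.1| ≠ |p.2|) : act (x * y) p = act x (act y p) := by
  have hyy : |y p.1| ≠ |y p.2| := fun h => hp (anti_abs_eq hy h)
  have hxyy : |x (y p.1)| ≠ |x (y p.2)| := fun h => hyy (anti_abs_eq hx h)
  by_cases h1 : |y p.2| < |y p.1|
  · simp [act, h1, Equiv.Perm.mul_apply]
    split_ifs with h <;> simp [h]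
  · have h1' : |y p.1| < |y p.2| := lt_of_le_of_ne (not_lt.mp h1) hyy
    simp only [act, h1, if_false, Equiv.Perm.mul_apply]
    by_cases h2 : |x (y p.2)| < |x (y p.1)|
    · simp [h2, not_lt.mpr h2.le]
    · simp [h2, lt_of_le_of_ne (not_lt.mp h2) hxyy]

lemma act_one {p : ℤ × ℤ} (hp : |p.2| < |p.1|) : act 1 p = p := by
  simp [act, hp]

lemma act_neg (hv : ∀ i : ℤ, v (-i) = -(v i)) (p : ℤ × ℤ) :
    act v (-p.1, -p.2) = (-(act v p).1, -(act v p).2) := by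
  simp only [act, hv p.1, hv p.2, abs_neg]
  split_ifs <;> simp

lemma act_inv_act (hv : ∀ i : ℤ, v (-i) = -(v i)) {p : ℤ × ℤ} (hp : |p.2| < |p.1|) :
    act v⁻¹ (act v p) = p := by
  rw [← act_mul (anti_inv hv) hv (by omega), inv_mul_cancel]
  exact act_one hp


/-! ### Sign computations -/


lemma act_single (hv : ∀ i : ℤ, v (-i) = -(v i)) {a : ℤ} (ha : a ≠ 0) :
    act v (a, 0) = (v a, 0) := by
  have h1 : (0 : ℤ) < |v a| := abs_pos.mpr (anti_ne_zero hv ha)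
  simp only [act, anti_zero hv, abs_zero]
  rw [if_pos h1]

lemma act_inv_sign (hv : ∀ i : ℤ, v (-i) = -(v i)) {a b : ℤ} (ha : a ≠ 0) (hb : b ≠ 0)
    (hab : |a| ≠ |b|) : ((act v (b, -a)).1 < 0 ↔ v b < v a) := by
  have habs : |v a| ≠ |v b| := fun h => hab (anti_abs_eq hv h)
  simp only [act, hv a, abs_neg]
  split_ifs with h
  · simp only [← Int.natCast_natAbs] at h habs
    simp only
    omega
  · simp only [← Int.natCast_natAbs] at h habs
    simp only
    omega

lemma act_nsp_sign (hv : ∀ i : ℤ, v (-i) = -(v i)) {a b : ℤ} (ha : a ≠ 0) (hb : b ≠ 0)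
    (hab : |a| ≠ |b|) : ((act v (b, a)).1 < 0 ↔ v a + v b < 0) := by
  have habs : |v a| ≠ |v b| := fun h => hab (anti_abs_eq hv h)
  simp only [act]
  split_ifs with h
  · simp only [← Int.natCast_natAbs] at h habs
    simp only
    omega
  · simp only [← Int.natCast_natAbs] at h habs
    simp only
    omega

/-! ### Positive roots -/

noncomputable def pairsLT (n : ℕ) : Finset (ℤ × ℤ) :=
  ((Finset.Icc 1 (n : ℤ)) ×ˢ (Finset.Icc 1 (n : ℤ))).filter fun p => p.1 < p.2

noncomputable def posRoots (n : ℕ) : Finset (ℤ × ℤ) :=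
  ((Finset.Icc 1 (n : ℤ)).image fun a => (a, (0 : ℤ))) ∪
  ((pairsLT n).image fun p => (p.2, -p.1)) ∪
  ((pairsLT n).image fun p => (p.2, p.1))

lemma mem_pairsLT {p : ℤ × ℤ} : p ∈ pairsLT n ↔ 1 ≤ p.1 ∧ p.1 < p.2 ∧ p.2 ≤ n := by
  simp only [pairsLT, Finset.mem_filter, Finset.mem_product, Finset.mem_Icc]
  constructor
  · rintro ⟨⟨⟨a1, a2⟩, b1, b2⟩, c⟩; exact ⟨a1, c, b2⟩
  · rintro ⟨a, b, c⟩; exact ⟨⟨⟨a, by omega⟩, by omega, c⟩, b⟩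

lemma mem_posRoots {p : ℤ × ℤ} : p ∈ posRoots n ↔ 0 < p.1 ∧ p.1 ≤ n ∧ |p.2| < p.1 := by
  simp only [posRoots, Finset.mem_union, Finset.mem_image, mem_pairsLT, Finset.mem_Icc]
  constructor
  · rintro ((⟨a, ⟨h1, h2⟩, rfl⟩ | ⟨q, ⟨h1, h2, h3⟩, rfl⟩) | ⟨q, ⟨h1, h2, h3⟩, rfl⟩) <;>
      simp only [abs_lt] <;> constructor <;> omega
  · rintro ⟨h1, h2, h3⟩
    rw [abs_lt] at h3
    rcases lt_trichotomy p.2 0 with h | h | h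
    · exact Or.inl (Or.inr ⟨(-p.2, p.1), ⟨by omega, by omega, h2⟩, by simp⟩)
    · exact Or.inl (Or.inl ⟨p.1, ⟨by omega, h2⟩, by rw [← h]⟩)
    · exact Or.inr ⟨(p.2, p.1), ⟨by omega, by omega, h2⟩, rfl⟩

lemma act_fst_snd (hv : ∀ i : ℤ, v (-i) = -(v i)) {p : ℤ × ℤ} (hp : |p.1| ≠ |p.2|) :
    |(act v p).2| < |(act v p).1| ∧
      ((act v p).1 = v p.1 ∧ (act v p).2 = v p.2 ∨
        (act v p).1 = v p.2 ∧ (act v p).2 = v p.1) := by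
  have hyy : |v p.1| ≠ |v p.2| := fun h => hp (anti_abs_eq hv h)
  simp only [act]
  split_ifs with h
  · exact ⟨h, Or.inl ⟨rfl, rfl⟩⟩
  · exact ⟨lt_of_le_of_ne (not_lt.mp h) hyy, Or.inr ⟨rfl, rfl⟩⟩

lemma act_mem_roots (hv : IsSignedPerm n v) {p : ℤ × ℤ} (hp : p ∈ posRoots n) :
    |(act v p).2| < |(act v p).1| ∧ |(act v p).1| ≤ n ∧ (act v p).1 ≠ 0 := by
  rw [mem_posRoots] at hp
  obtain ⟨h1, h2, h3⟩ := hp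
  have hp' : |p.1| ≠ |p.2| := by
    simp only [← Int.natCast_natAbs] at h3 ⊢
    omega
  obtain ⟨ha, hb⟩ := act_fst_snd hv.1 hp'
  have b1 : |v p.1| ≤ n := isp_abs_le hv (by rw [abs_of_pos h1]; omega)
  have b2 : |v p.2| ≤ n := isp_abs_le hv (by omega)
  refine ⟨ha, ?_, ?_⟩
  · rcases hb with ⟨e1, _⟩ | ⟨e1, _⟩ <;> rw [e1] <;> assumption
  · intro h0
    rw [h0] at ha
    simp only [← Int.natCast_natAbs] at ha
    omega

/-- normalized image root, always positive -/
def psi (v : Equiv.Perm ℤ) (p : ℤ × ℤ) : ℤ × ℤ :=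
  if (act v p).1 < 0 then (-(act v p).1, -(act v p).2) else act v p

lemma psi_mem (hv : IsSignedPerm n v) {p : ℤ × ℤ} (hp : p ∈ posRoots n) :
    psi v p ∈ posRoots n := by
  obtain ⟨h1, h2, h3⟩ := act_mem_roots hv hp
  rw [mem_posRoots]
  unfold psi
  split_ifs with h
  · simp only [abs_neg, ← Int.natCast_natAbs] at h1 h2 h3 ⊢
    omega
  · simp only [← Int.natCast_natAbs] at h1 h2 h3 ⊢
    omega

lemma psi_psi (hv : IsSignedPerm n v) {p : ℤ × ℤ} (hp : p ∈ posRoots n) :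
    psi v⁻¹ (psi v p) = p := by
  have hp' := mem_posRoots.mp hp
  have hps : |p.2| < |p.1| := by rw [abs_of_pos hp'.1]; exact hp'.2.2
  have hinv : act v⁻¹ (act v p) = p := act_inv_act hv.1 hps
  by_cases h : (act v p).1 < 0
  · have hneg : act v⁻¹ (-(act v p).1, -(act v p).2) = (-p.1, -p.2) := by
      rw [act_neg (anti_inv hv.1) (act v p), hinv]
    simp only [psi, if_pos h, hneg]
    rw [if_pos (show ((-p.1 : ℤ), -p.2).1 < 0 by simp only; omega)]
    simp
  · simp only [psi, if_neg h, hinv]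
    rw [if_neg (show ¬((p.1, p.2).1 < 0) by simp only; omega)]



/-! ### Length as root count -/

lemma isp_mul (hx : IsSignedPerm n x) (hy : IsSignedPerm n y) : IsSignedPerm n (x * y) := by
  constructor
  · intro i
    simp [Equiv.Perm.mul_apply, hy.1, hx.1]
  · intro i hi
    have h1 := hy.2 i hi
    simp only [Equiv.Perm.mul_apply, h1]
    exact hx.2 i hi

lemma mem_posRoots_abs {p : ℤ × ℤ} (hp : p ∈ posRoots n) : |p.2| < |p.1| ∧ |p.1| ≤ (n : ℤ) := by
  rw [mem_posRoots] at hp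
  rw [abs_of_pos hp.1]
  exact ⟨hp.2.2, hp.2.1⟩

noncomputable def NR (n : ℕ) (v : Equiv.Perm ℤ) : Finset (ℤ × ℤ) :=
  (posRoots n).filter fun p => (act v p).1 < 0

lemma len_eq_card_NR (hv : IsSignedPerm n v) : len n v = (NR n v).card := by
  classical
  have hinj0 : Function.Injective (fun a : ℤ => (a, (0 : ℤ))) := fun a b h => congrArg Prod.fst h
  have hinjm : Function.Injective (fun p : ℤ × ℤ => (p.2, -p.1)) := by
    rintro ⟨a, b⟩ ⟨c, d⟩ h
    simp only [Prod.mk.injEq] at h ⊢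
    omega
  have hinjp : Function.Injective (fun p : ℤ × ℤ => (p.2, p.1)) := by
    rintro ⟨a, b⟩ ⟨c, d⟩ h
    simp only [Prod.mk.injEq] at h ⊢
    omega
  have e0 : (((Finset.Icc 1 (n : ℤ)).image fun a => (a, (0 : ℤ))).filter
      fun p => (act v p).1 < 0).card = (NegSet n v).card := by
    rw [Finset.filter_image, Finset.card_image_of_injective _ hinj0]
    congr 1
    apply Finset.filter_congr
    intro a ha
    rw [Finset.mem_Icc] at ha
    rw [act_single hv.1 (by omega : a ≠ 0)]
  have em : (((pairsLT n).image fun p : ℤ × ℤ => (p.2, -p.1)).filter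
      fun p => (act v p).1 < 0).card = (InvSet n v).card := by
    rw [Finset.filter_image, Finset.card_image_of_injective _ hinjm]
    have : ((pairsLT n).filter fun p : ℤ × ℤ => (act v (p.2, -p.1)).1 < 0)
        = (pairsLT n).filter fun p => v p.2 < v p.1 := by
      apply Finset.filter_congr
      intro p hp
      rw [mem_pairsLT] at hp
      have h1 : p.1 ≠ 0 := by omega
      have h2 : p.2 ≠ 0 := by omega
      have h3 : |p.1| ≠ |p.2| := by
        rw [abs_of_pos (by omega : (0:ℤ) < p.1), abs_of_pos (by omega : (0:ℤ) < p.2)]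
        omega
      exact act_inv_sign hv.1 h1 h2 h3
    rw [this, pairsLT, Finset.filter_filter, InvSet]
  have ep : (((pairsLT n).image fun p : ℤ × ℤ => (p.2, p.1)).filter
      fun p => (act v p).1 < 0).card = (NspSet n v).card := by
    rw [Finset.filter_image, Finset.card_image_of_injective _ hinjp]
    have : ((pairsLT n).filter fun p : ℤ × ℤ => (act v (p.2, p.1)).1 < 0)
        = (pairsLT n).filter fun p => v p.1 + v p.2 < 0 := by
      apply Finset.filter_congr
      intro p hp
      rw [mem_pairsLT] at hp
      have h1 : p.1 ≠ 0 := by omega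
      have h2 : p.2 ≠ 0 := by omega
      have h3 : |p.1| ≠ |p.2| := by
        rw [abs_of_pos (by omega : (0:ℤ) < p.1), abs_of_pos (by omega : (0:ℤ) < p.2)]
        omega
      exact act_nsp_sign hv.1 h1 h2 h3
    rw [this, pairsLT, Finset.filter_filter, NspSet]
  have hd1 : Disjoint ((Finset.Icc 1 (n : ℤ)).image fun a => (a, (0 : ℤ)))
      ((pairsLT n).image fun p : ℤ × ℤ => (p.2, -p.1)) := by
    rw [Finset.disjoint_left]
    rintro ⟨a, b⟩ h1 h2
    simp only [Finset.mem_image, Prod.mk.injEq] at h1 h2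
    obtain ⟨c, _, _, hb1⟩ := h1
    obtain ⟨q, hq, _, hb2⟩ := h2
    rw [mem_pairsLT] at hq
    omega
  have hd2 : Disjoint (((Finset.Icc 1 (n : ℤ)).image fun a => (a, (0 : ℤ))) ∪
      ((pairsLT n).image fun p : ℤ × ℤ => (p.2, -p.1)))
      ((pairsLT n).image fun p : ℤ × ℤ => (p.2, p.1)) := by
    rw [Finset.disjoint_left]
    rintro ⟨a, b⟩ h1 h2
    simp only [Finset.mem_union, Finset.mem_image, Prod.mk.injEq] at h1 h2
    obtain ⟨q, hq, _, hb⟩ := h2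
    rw [mem_pairsLT] at hq
    rcases h1 with ⟨c, _, _, hb1⟩ | ⟨q', hq', _, hb2⟩
    · omega
    · rw [mem_pairsLT] at hq'
      omega
  rw [NR, posRoots, Finset.filter_union, Finset.filter_union,
    Finset.card_union_of_disjoint, Finset.card_union_of_disjoint]
  · rw [e0, em, ep, len]
  · exact Finset.disjoint_filter_filter hd1
  · rw [← Finset.filter_union]
    exact Finset.disjoint_filter_filter hd2

/-! ### The key containment lemma -/

lemma NR_subset_of_leL (hu : IsSignedPerm n u) (hw : IsSignedPerm n w) (hle : leL n u w) :
    NR n u ⊆ NR n w := by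
  classical
  set x := w * u⁻¹ with hx
  have hxs : IsSignedPerm n x := isp_mul hw (isp_inv hu)
  have hw_eq : w = x * u := by
    rw [hx, mul_assoc, inv_mul_cancel, mul_one]
  have key : ∀ p ∈ posRoots n, act w p = act x (act u p) := by
    intro p hp
    have habs : |p.1| ≠ |p.2| := by
      have := mem_posRoots_abs hp
      omega
    rw [hw_eq]
    exact act_mul hxs.1 hu.1 habs
  set R : ℤ × ℤ → Prop := fun p => (act x (psi u p)).1 < 0 with hR
  have claimA : ∀ p ∈ posRoots n, (act u p).1 < 0 → ((act w p).1 < 0 ↔ ¬ R p) := by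
    intro p hp hneg
    have hpsi : psi u p = (-(act u p).1, -(act u p).2) := by rw [psi, if_pos hneg]
    have h2 : act x (psi u p) = (-(act x (act u p)).1, -(act x (act u p)).2) := by
      rw [hpsi, act_neg hxs.1]
    have h3 : (act w p).1 ≠ 0 := (act_mem_roots hw hp).2.2
    rw [hR]
    simp only [h2, ← key p hp]
    omega
  have claimB : ∀ p ∈ posRoots n, ¬ ((act u p).1 < 0) → ((act w p).1 < 0 ↔ R p) := by
    intro p hp hneg
    have hpsi : psi u p = act u p := by rw [psi, if_neg hneg]
    rw [hR]
    simp only [hpsi, ← key p hp]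
  set PR := posRoots n with hPR
  set A := NR n u with hA
  have hApr : A ⊆ PR := Finset.filter_subset _ _
  have hNu : len n u = A.card := len_eq_card_NR hu
  have hNx : len n x = (NR n x).card := len_eq_card_NR hxs
  have hNw : len n w = (NR n w).card := len_eq_card_NR hw
  have hdisjA : Disjoint A (PR \ A) := Finset.disjoint_sdiff
  have memA : ∀ p, p ∈ A ↔ p ∈ PR ∧ (act u p).1 < 0 := by
    intro p
    rw [hA, NR, Finset.mem_filter, hPR]
  -- split of N w
  have hsplitW : (NR n w).card = (A.filter fun p => ¬ R p).card + ((PR \ A).filter R).card := by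
    have h1 : NR n w = (A.filter fun p => ¬ R p) ∪ ((PR \ A).filter R) := by
      ext p
      rw [NR, Finset.mem_filter, ← hPR, Finset.mem_union, Finset.mem_filter,
        Finset.mem_filter, Finset.mem_sdiff]
      constructor
      · rintro ⟨hpPR, hcw⟩
        by_cases hpA : p ∈ A
        · exact Or.inl ⟨hpA, (claimA p hpPR ((memA p).mp hpA).2).mp hcw⟩
        · refine Or.inr ⟨⟨hpPR, hpA⟩, ?_⟩
          have hnot : ¬ ((act u p).1 < 0) := fun hc => hpA ((memA p).mpr ⟨hpPR, hc⟩)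
          exact (claimB p hpPR hnot).mp hcw
      · rintro (⟨hpA, hnR⟩ | ⟨⟨hpPR, hpA⟩, hRp⟩)
        · have h2 := (memA p).mp hpA
          exact ⟨h2.1, (claimA p h2.1 h2.2).mpr hnR⟩
        · have hnot : ¬ ((act u p).1 < 0) := fun hc => hpA ((memA p).mpr ⟨hpPR, hc⟩)
          exact ⟨hpPR, (claimB p hpPR hnot).mpr hRp⟩
    rw [h1]
    exact Finset.card_union_of_disjoint
      (Finset.disjoint_filter_filter hdisjA)
  -- count of R over PR equals len x
  have hRcard : (PR.filter R).card = (NR n x).card := by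
    apply Finset.card_bij' (fun p _ => psi u p) (fun q _ => psi u⁻¹ q)
    · intro p hp
      rw [Finset.mem_filter] at hp
      rw [NR, Finset.mem_filter]
      exact ⟨psi_mem hu hp.1, hp.2⟩
    · intro q hq
      rw [NR, Finset.mem_filter] at hq
      rw [Finset.mem_filter]
      have hmem : psi u⁻¹ q ∈ PR := psi_mem (isp_inv hu) hq.1
      refine ⟨hmem, ?_⟩
      have hpp : psi u (psi u⁻¹ q) = q := by
        have := psi_psi (isp_inv hu) hq.1
        rwa [inv_inv] at this
      rw [hR]
      simp only [hpp]
      exact hq.2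
    · intro p hp
      rw [Finset.mem_filter] at hp
      exact psi_psi hu hp.1
    · intro q hq
      rw [NR, Finset.mem_filter] at hq
      have := psi_psi (isp_inv hu) hq.1
      rwa [inv_inv] at this
  have hsplitX : (PR.filter R).card = (A.filter R).card + ((PR \ A).filter R).card := by
    have h1 : PR.filter R = (A.filter R) ∪ ((PR \ A).filter R) := by
      ext p
      rw [Finset.mem_union, Finset.mem_filter, Finset.mem_filter, Finset.mem_filter,
        Finset.mem_sdiff]
      constructor
      · rintro ⟨hpPR, hRp⟩
        by_cases hpA : p ∈ A
        · exact Or.inl ⟨hpA, hRp⟩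
        · exact Or.inr ⟨⟨hpPR, hpA⟩, hRp⟩
      · rintro (⟨hpA, hRp⟩ | ⟨⟨hpPR, _⟩, hRp⟩)
        · exact ⟨hApr hpA, hRp⟩
        · exact ⟨hpPR, hRp⟩
    rw [h1]
    exact Finset.card_union_of_disjoint (Finset.disjoint_filter_filter hdisjA)
  have hAcard : (A.filter R).card + (A.filter fun p => ¬ R p).card = A.card := by
    have hd : Disjoint (A.filter R) (A.filter fun p => ¬ R p) := by
      rw [Finset.disjoint_left]
      intro p h1 h2
      exact (Finset.mem_filter.mp h2).2 (Finset.mem_filter.mp h1).2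
    rw [← Finset.card_union_of_disjoint hd]
    congr 1
    ext p
    rw [Finset.mem_union, Finset.mem_filter, Finset.mem_filter]
    constructor
    · rintro (⟨h1, _⟩ | ⟨h1, _⟩) <;> exact h1
    · intro h1
      by_cases hp : R p
      · exact Or.inl ⟨h1, hp⟩
      · exact Or.inr ⟨h1, hp⟩
  have hc0 : (A.filter R).card = 0 := by
    have hle' := hle
    rw [leL, ← hx] at hle'
    omega
  have hc0' : A.filter R = ∅ := Finset.card_eq_zero.mp hc0
  intro p hpA
  have hpPR : p ∈ PR := hApr hpA
  have hpu : (act u p).1 < 0 := by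
    rw [hA, NR, Finset.mem_filter] at hpA
    exact hpA.2
  have hnR : ¬ R p := by
    intro hc
    have : p ∈ A.filter R := Finset.mem_filter.mpr ⟨hpA, hc⟩
    rw [hc0'] at this
    exact absurd this (Finset.notMem_empty p)
  rw [NR, Finset.mem_filter]
  exact ⟨hpPR, (claimA p hpPR hpu).mpr hnR⟩


/-! ### Corollaries: containment of the three inversion sets -/

lemma mem_NegSet' {a : ℤ} : a ∈ NegSet n v ↔ 1 ≤ a ∧ a ≤ n ∧ v a < 0 := by
  simp only [NegSet, Finset.mem_filter, Finset.mem_Icc]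
  tauto

lemma mem_InvSet' {a b : ℤ} : (a, b) ∈ InvSet n v ↔ 1 ≤ a ∧ a < b ∧ b ≤ n ∧ v b < v a := by
  simp only [InvSet, Finset.mem_filter, Finset.mem_product, Finset.mem_Icc]
  constructor
  · rintro ⟨⟨⟨a1, a2⟩, b1, b2⟩, c, d⟩
    exact ⟨a1, c, b2, d⟩
  · rintro ⟨a1, c, b2, d⟩
    exact ⟨⟨⟨a1, by omega⟩, by omega, b2⟩, c, d⟩

lemma mem_NspSet' {a b : ℤ} : (a, b) ∈ NspSet n v ↔ 1 ≤ a ∧ a < b ∧ b ≤ n ∧ v a + v b < 0 := by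
  simp only [NspSet, Finset.mem_filter, Finset.mem_product, Finset.mem_Icc]
  constructor
  · rintro ⟨⟨⟨a1, a2⟩, b1, b2⟩, c, d⟩
    exact ⟨a1, c, b2, d⟩
  · rintro ⟨a1, c, b2, d⟩
    exact ⟨⟨⟨a1, by omega⟩, by omega, b2⟩, c, d⟩

lemma neg_subset (hu : IsSignedPerm n u) (hw : IsSignedPerm n w) (hle : leL n u w) :
    NegSet n u ⊆ NegSet n w := by
  intro a ha
  rw [mem_NegSet'] at ha ⊢
  obtain ⟨h1, h2, h3⟩ := ha
  have ha0 : a ≠ 0 := by omega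
  have hroot : (a, (0:ℤ)) ∈ posRoots n := mem_posRoots.mpr ⟨by omega, h2, by simp; omega⟩
  have hmem : (a, (0:ℤ)) ∈ NR n u := by
    rw [NR, Finset.mem_filter, act_single hu.1 ha0]
    exact ⟨hroot, h3⟩
  have := NR_subset_of_leL hu hw hle hmem
  rw [NR, Finset.mem_filter, act_single hw.1 ha0] at this
  exact ⟨h1, h2, this.2⟩

lemma inv_subset (hu : IsSignedPerm n u) (hw : IsSignedPerm n w) (hle : leL n u w) :
    InvSet n u ⊆ InvSet n w := by
  rintro ⟨a, b⟩ ha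
  rw [mem_InvSet'] at ha ⊢
  obtain ⟨h1, h2, h3, h4⟩ := ha
  have ha0 : a ≠ 0 := by omega
  have hb0 : b ≠ 0 := by omega
  have hab : |a| ≠ |b| := by
    rw [abs_of_pos (by omega : (0:ℤ) < a), abs_of_pos (by omega : (0:ℤ) < b)]
    omega
  have hroot : ((b : ℤ), -a) ∈ posRoots n := by
    rw [mem_posRoots]
    refine ⟨by omega, h3, ?_⟩
    rw [abs_neg, abs_of_pos (by omega : (0:ℤ) < a)]
    omega
  have hmem : ((b : ℤ), -a) ∈ NR n u := by
    rw [NR, Finset.mem_filter, act_inv_sign hu.1 ha0 hb0 hab]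
    exact ⟨hroot, h4⟩
  have := NR_subset_of_leL hu hw hle hmem
  rw [NR, Finset.mem_filter, act_inv_sign hw.1 ha0 hb0 hab] at this
  exact ⟨h1, h2, h3, this.2⟩

lemma nsp_subset (hu : IsSignedPerm n u) (hw : IsSignedPerm n w) (hle : leL n u w) :
    NspSet n u ⊆ NspSet n w := by
  rintro ⟨a, b⟩ ha
  rw [mem_NspSet'] at ha ⊢
  obtain ⟨h1, h2, h3, h4⟩ := ha
  have ha0 : a ≠ 0 := by omega
  have hb0 : b ≠ 0 := by omega
  have hab : |a| ≠ |b| := by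
    rw [abs_of_pos (by omega : (0:ℤ) < a), abs_of_pos (by omega : (0:ℤ) < b)]
    omega
  have hroot : ((b : ℤ), a) ∈ posRoots n := by
    rw [mem_posRoots]
    refine ⟨by omega, h3, ?_⟩
    rw [abs_of_pos (by omega : (0:ℤ) < a)]
    omega
  have hmem : ((b : ℤ), a) ∈ NR n u := by
    rw [NR, Finset.mem_filter, act_nsp_sign hu.1 ha0 hb0 hab]
    exact ⟨hroot, h4⟩
  have := NR_subset_of_leL hu hw hle hmem
  rw [NR, Finset.mem_filter, act_nsp_sign hw.1 ha0 hb0 hab] at this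
  exact ⟨h1, h2, h3, this.2⟩

/-- a generic filter-split lemma avoiding instance issues -/
lemma filter_split {α : Type*} [DecidableEq α] (s : Finset α) (p : α → Prop) [DecidablePred p] :
    (s.filter p).card + (s.filter fun a => ¬ p a).card = s.card := by
  have hd : Disjoint (s.filter p) (s.filter fun a => ¬ p a) := by
    rw [Finset.disjoint_left]
    intro a h1 h2
    exact (Finset.mem_filter.mp h2).2 (Finset.mem_filter.mp h1).2
  rw [← Finset.card_union_of_disjoint hd]
  congr 1
  ext a
  rw [Finset.mem_union, Finset.mem_filter, Finset.mem_filter]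
  constructor
  · rintro (⟨h1, _⟩ | ⟨h1, _⟩) <;> exact h1
  · intro h1
    by_cases hp : p a
    · exact Or.inl ⟨h1, hp⟩
    · exact Or.inr ⟨h1, hp⟩

end Stmt10

/-- For the special `w` of Statement 9 and `u ≤_L w` with `u_n = n-1`,
`u_i = -n`, `ℓ(u) = ℓ(w) - k`, and `r ≤ min{i, n-k-1}`, one has
`{-(n-2),…,-(n-r)} ⊆ {u_1,…,u_{i-1}}`. -/
theorem lower_interval_prefix_entries (n : ℕ) (hn : 3 ≤ n)
    (i : ℕ) (hi1 : 1 ≤ i) (hi2 : i ≤ n - 2)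
    (w : Equiv.Perm ℤ) (hw : IsSignedPerm n w)
    (hwn : w (n : ℤ) = (n : ℤ) - 1) (hwi : w (i : ℤ) = -(n : ℤ))
    (hpre : (Finset.Icc (1 : ℤ) ((i : ℤ) - 1)).image (fun j => w j) =
      Finset.Icc (-((n : ℤ) - 2)) (-((n : ℤ) - (i : ℤ))))
    (hsuf : (Finset.Icc ((i : ℤ) + 1) ((n : ℤ) - 1)).image (fun j => w j) =
      Finset.Icc (-((n : ℤ) - (i : ℤ) - 1)) (-1))
    (u : Equiv.Perm ℤ) (hu : IsSignedPerm n u) (hle : leL n u w)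
    (hun : u (n : ℤ) = (n : ℤ) - 1) (hui : u (i : ℤ) = -(n : ℤ))
    (k r : ℕ) (hk : 1 ≤ k) (hr : 1 ≤ r)
    (hlen : len n u + k = len n w)
    (hrmin : (r : ℤ) ≤ min (i : ℤ) ((n : ℤ) - (k : ℤ) - 1)) :
    Finset.Icc (-((n : ℤ) - 2)) (-((n : ℤ) - (r : ℤ))) ⊆
      (Finset.Icc (1 : ℤ) ((i : ℤ) - 1)).image (fun j => u j) := by
  classical
  open Stmt10 in
  have hNegS : NegSet n u ⊆ NegSet n w := Stmt10.neg_subset hu hw hle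
  have hInvS : InvSet n u ⊆ InvSet n w := Stmt10.inv_subset hu hw hle
  have hNspS : NspSet n u ⊆ NspSet n w := Stmt10.nsp_subset hu hw hle
  have hn3 : (3 : ℤ) ≤ (n : ℤ) := by exact_mod_cast hn
  have hi1' : (1 : ℤ) ≤ (i : ℤ) := by exact_mod_cast hi1
  have hi2' : (i : ℤ) ≤ (n : ℤ) - 2 := by
    have h2 : (i : ℤ) ≤ ((n - 2 : ℕ) : ℤ) := by exact_mod_cast hi2
    omega
  have hk1 : (1 : ℤ) ≤ (k : ℤ) := by exact_mod_cast hk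
  have hr1 : (1 : ℤ) ≤ (r : ℤ) := by exact_mod_cast hr
  have hrm1 : (r : ℤ) ≤ (i : ℤ) := le_trans hrmin (min_le_left _ _)
  have hrm2 : (r : ℤ) ≤ (n : ℤ) - (k : ℤ) - 1 := le_trans hrmin (min_le_right _ _)
  -- structure of w
  have hwpre : ∀ j : ℤ, 1 ≤ j → j ≤ (i : ℤ) - 1 →
      -((n : ℤ) - 2) ≤ w j ∧ w j ≤ -((n : ℤ) - (i : ℤ)) := by
    intro j h1 h2
    have hmem : w j ∈ Finset.Icc (-((n : ℤ) - 2)) (-((n : ℤ) - (i : ℤ))) := by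
      rw [← hpre]
      exact Finset.mem_image_of_mem _ (Finset.mem_Icc.mpr ⟨h1, h2⟩)
    exact Finset.mem_Icc.mp hmem
  have hwsuf : ∀ j : ℤ, (i : ℤ) + 1 ≤ j → j ≤ (n : ℤ) - 1 →
      -((n : ℤ) - (i : ℤ) - 1) ≤ w j ∧ w j ≤ -1 := by
    intro j h1 h2
    have hmem : w j ∈ Finset.Icc (-((n : ℤ) - (i : ℤ) - 1)) (-1) := by
      rw [← hsuf]
      exact Finset.mem_image_of_mem _ (Finset.mem_Icc.mpr ⟨h1, h2⟩)
    exact Finset.mem_Icc.mp hmem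
  have hwneg : ∀ j : ℤ, 1 ≤ j → j ≤ (n : ℤ) - 1 → w j < 0 := by
    intro j h1 h2
    rcases lt_trichotomy j (i : ℤ) with h | h | h
    · have := hwpre j h1 (by omega)
      omega
    · rw [h, hwi]; omega
    · have := hwsuf j (by omega) h2
      omega
  -- bounds on the entries of u
  have hubound : ∀ j : ℤ, 1 ≤ j → j ≤ (n : ℤ) - 1 → j ≠ (i : ℤ) →
      -((n : ℤ) - 2) ≤ u j ∧ u j ≤ (n : ℤ) - 2 := by
    intro j h1 h2 hji
    constructor
    · by_contra hc
      push_neg at hc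
      rcases eq_or_lt_of_le (by omega : u j ≤ -((n : ℤ) - 1)) with heq | hlt
      · -- u j = -(n-1), so u (-j) = n - 1 = u n, giving -j = n, impossible
        have : u (-j) = (n : ℤ) - 1 := by rw [hu.1 j, heq]; ring
        have : (-j : ℤ) = (n : ℤ) := u.injective (by rw [this, hun])
        omega
      · -- u j ≤ -n : the pair (j, n) is in Nsp(u) hence Nsp(w)
        have hmem : ((j : ℤ), (n : ℤ)) ∈ NspSet n u :=
          Stmt10.mem_NspSet'.mpr ⟨h1, by omega, le_refl _, by rw [hun]; omega⟩
        have hmem' := hNspS hmem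
        rw [Stmt10.mem_NspSet', hwn] at hmem'
        have hwj : w j < -((n : ℤ) - 1) := by omega
        have hwabs : |w j| ≤ (n : ℤ) := Stmt10.isp_abs_le hw (by rw [abs_of_pos (by omega : (0:ℤ) < j)]; omega)
        have hwjn : w j = -(n : ℤ) := by
          rcases abs_le.mp hwabs with ⟨hl, _⟩
          omega
        have : j = (i : ℤ) := w.injective (by rw [hwjn, hwi])
        exact hji this
    · by_contra hc
      push_neg at hc
      rcases eq_or_lt_of_le (by omega : (n : ℤ) - 1 ≤ u j) with heq | hlt
      · have : j = (n : ℤ) := u.injective (by rw [← heq, hun])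
        omega
      · have hmem : ((j : ℤ), (n : ℤ)) ∈ InvSet n u :=
          Stmt10.mem_InvSet'.mpr ⟨h1, by omega, le_refl _, by rw [hun]; omega⟩
        have hmem' := hInvS hmem
        rw [Stmt10.mem_InvSet', hwn] at hmem'
        have hwj := hwneg j h1 h2
        omega
  -- main argument
  intro vv hvv
  rw [Finset.mem_Icc] at hvv
  set m : ℤ := -vv with hm
  have hm1 : (n : ℤ) - (r : ℤ) ≤ m := by omega
  have hm2 : m ≤ (n : ℤ) - 2 := by omega
  have hmpos : (2 : ℤ) ≤ m := by omega
  -- locate the value ±m in u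
  obtain ⟨j₀, hj₀1, hj₀n, hval⟩ :
      ∃ j₀ : ℤ, 1 ≤ j₀ ∧ j₀ ≤ (n : ℤ) ∧ (u j₀ = -m ∨ u j₀ = m) := by
    set c := u⁻¹ (-m) with hcc
    have hc : u c = -m := u.apply_symm_apply (-m)
    have hcabs : |c| ≤ (n : ℤ) := by
      have := Stmt10.isp_abs_le (Stmt10.isp_inv hu) (a := -m)
        (by rw [abs_neg, abs_of_pos (by omega : (0:ℤ) < m)]; omega)
      exact this
    have hc0 : c ≠ 0 := by
      intro h
      rw [h, Stmt10.anti_zero hu.1] at hc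
      omega
    rcases lt_or_gt_of_ne hc0 with h | h
    · refine ⟨-c, by omega, by rw [abs_of_neg h] at hcabs; omega, Or.inr ?_⟩
      rw [hu.1 c, hc]; ring
    · exact ⟨c, by omega, by rw [abs_of_pos h] at hcabs; omega, Or.inl hc⟩
  have hj₀ne_n : j₀ ≠ (n : ℤ) := by
    intro h
    rw [h, hun] at hval
    omega
  have hj₀ne_i : j₀ ≠ (i : ℤ) := by
    intro h
    rw [h, hui] at hval
    omega
  have hj₀n' : j₀ ≤ (n : ℤ) - 1 := by omega
  -- the target set for values below -m
  set Tgt : Finset ℤ := insert (-(n : ℤ)) (Finset.Icc (-(n : ℤ) + 2) (-m - 1)) with hTgt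
  have hTgtcard : Tgt.card ≤ 1 + ((n : ℤ) - 2 - m).toNat := by
    refine le_trans (Finset.card_insert_le _ _) ?_
    rw [Int.card_Icc]
    omega
  have hTgtmem : ∀ j : ℤ, 1 ≤ j → j ≤ (n : ℤ) - 1 → u j < -m → u j ∈ Tgt := by
    intro j h1 h2 h3
    by_cases hij : j = (i : ℤ)
    · rw [hij, hui, hTgt]
      exact Finset.mem_insert_self _ _
    · have := hubound j h1 h2 hij
      rw [hTgt]
      refine Finset.mem_insert_of_mem (Finset.mem_Icc.mpr ⟨by omega, by omega⟩)
  rcases hval with hvneg | hvpos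
  · -- u j₀ = -m
    rcases lt_or_ge j₀ (i : ℤ) with hcase | hcase
    · -- good case : j₀ is in the prefix
      refine Finset.mem_image.mpr ⟨j₀, Finset.mem_Icc.mpr ⟨hj₀1, by omega⟩, ?_⟩
      rw [hvneg]; omega
    · -- bad case : i < j₀ ≤ n-1 : pigeonhole contradiction
      exfalso
      have hcase' : (i : ℤ) + 1 ≤ j₀ := by omega
      set G := (Finset.Icc (1 : ℤ) (j₀ - 1)).filter (fun p => -m < u p) with hG
      set B := (Finset.Icc (1 : ℤ) (j₀ - 1)).filter (fun p => u p < -m) with hB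
      have hBeq : (Finset.Icc (1 : ℤ) (j₀ - 1)).filter (fun a => ¬ (-m < u a)) = B := by
        rw [hB]
        apply Finset.filter_congr
        intro p hp
        rw [Finset.mem_Icc] at hp
        have hne : u p ≠ -m := by
          intro h
          have : p = j₀ := u.injective (by rw [h, hvneg])
          omega
        constructor
        · intro h; omega
        · intro h; omega
      have hsplit : G.card + B.card = (j₀ - 1 + 1 - 1).toNat := by
        rw [← Int.card_Icc (1 : ℤ) (j₀ - 1)]
        have := Stmt10.filter_split (Finset.Icc (1 : ℤ) (j₀ - 1)) (fun p => -m < u p)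
        rw [hBeq] at this
        rw [hG]
        exact this
      have hGsub : G ⊆ Finset.Icc ((i : ℤ) + 1) (j₀ - 1) := by
        intro p hp
        rw [hG, Finset.mem_filter, Finset.mem_Icc] at hp
        obtain ⟨⟨h1, h2⟩, h3⟩ := hp
        have hmem : ((p : ℤ), j₀) ∈ InvSet n u :=
          Stmt10.mem_InvSet'.mpr ⟨h1, by omega, by omega, by rw [hvneg]; omega⟩
        have hmem' := hInvS hmem
        rw [Stmt10.mem_InvSet'] at hmem'
        have hwj₀ := hwsuf j₀ hcase' hj₀n'
        rcases lt_trichotomy p (i : ℤ) with h | h | h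
        · have := hwpre p h1 (by omega)
          omega
        · rw [h, hwi] at hmem'
          omega
        · exact Finset.mem_Icc.mpr ⟨by omega, h2⟩
      have hGcard : G.card ≤ (j₀ - 1 - (i : ℤ)).toNat := by
        refine le_trans (Finset.card_le_card hGsub) ?_
        rw [Int.card_Icc]
        omega
      have hBcard : B.card ≤ Tgt.card := by
        apply Finset.card_le_card_of_injOn (fun p => u p)
        · intro p hp
          rw [Finset.mem_coe, hB, Finset.mem_filter, Finset.mem_Icc] at hp
          exact hTgtmem p hp.1.1 (by omega) hp.2
        · intro p _ q _ h
          exact u.injective h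
      omega
  · -- u j₀ = m > 0 : length-drop contradiction
    exfalso
    -- Neg drop
    have hNegDrop : 1 ≤ (NegSet n w \ NegSet n u).card := by
      refine Finset.card_pos.mpr ⟨j₀, ?_⟩
      rw [Finset.mem_sdiff, Stmt10.mem_NegSet', Stmt10.mem_NegSet']
      refine ⟨⟨hj₀1, by omega, hwneg j₀ hj₀1 hj₀n'⟩, ?_⟩
      intro h
      rw [hvpos] at h
      omega
    -- Nsp drop
    set f : ℤ → ℤ × ℤ := fun a => if a < j₀ then (a, j₀) else (j₀, a) with hf
    set E := (Finset.Icc (1 : ℤ) ((n : ℤ) - 1)).erase j₀ with hE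
    have hEmem : ∀ a ∈ E, a ≠ j₀ ∧ 1 ≤ a ∧ a ≤ (n : ℤ) - 1 := by
      intro a ha
      rw [hE, Finset.mem_erase, Finset.mem_Icc] at ha
      exact ⟨ha.1, ha.2.1, ha.2.2⟩
    have hEcard : E.card = ((n : ℤ) - 1 + 1 - 1).toNat - 1 := by
      rw [hE, Finset.card_erase_of_mem (Finset.mem_Icc.mpr ⟨hj₀1, hj₀n'⟩), Int.card_Icc]
    have hfinj : Set.InjOn f E := by
      intro a ha b hb hab
      have ha' := hEmem a ha
      have hb' := hEmem b hb
      rw [hf] at hab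
      by_cases h1 : a < j₀ <;> by_cases h2 : b < j₀ <;>
        simp only [h1, h2, if_pos, if_neg, if_true, if_false, Prod.mk.injEq] at hab <;>
        omega
    set T := E.image f with hT
    have hTcard : T.card = E.card := Finset.card_image_of_injOn hfinj
    have hTsub : T ⊆ NspSet n w := by
      intro p hp
      rw [hT, Finset.mem_image] at hp
      obtain ⟨a, ha, rfl⟩ := hp
      have ha' := hEmem a ha
      by_cases h1 : a < j₀
      · have hfa : f a = (a, j₀) := by simp [hf, h1]
        rw [hfa, Stmt10.mem_NspSet']
        have hwa := hwneg a ha'.2.1 ha'.2.2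
        have hwj := hwneg j₀ hj₀1 hj₀n'
        exact ⟨ha'.2.1, h1, by omega, by omega⟩
      · have hfa : f a = (j₀, a) := by simp [hf, h1]
        rw [hfa, Stmt10.mem_NspSet']
        have hwa := hwneg a ha'.2.1 ha'.2.2
        have hwj := hwneg j₀ hj₀1 hj₀n'
        exact ⟨hj₀1, by omega, by omega, by omega⟩
    have hTfil : (T.filter (fun p => p ∈ NspSet n u)).card ≤ Tgt.card := by
      rw [hT, Finset.filter_image,
        Finset.card_image_of_injOn (hfinj.mono (Finset.filter_subset _ _))]
      apply Finset.card_le_card_of_injOn (fun a => u a)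
      · intro a ha
        rw [Finset.mem_coe, Finset.mem_filter] at ha
        have ha' := hEmem a ha.1
        have hua : u a < -m := by
          have hcond := ha.2
          by_cases h1 : a < j₀
          · have hfa : f a = (a, j₀) := by simp [hf, h1]
            rw [hfa, Stmt10.mem_NspSet'] at hcond
            rw [hvpos] at hcond
            omega
          · have hfa : f a = (j₀, a) := by simp [hf, h1]
            rw [hfa, Stmt10.mem_NspSet'] at hcond
            rw [hvpos] at hcond
            omega
        exact hTgtmem a ha'.2.1 ha'.2.2 hua
      · intro p _ q _ h
        exact u.injective h
    have hNspDrop : ((m : ℤ) - 1).toNat ≤ (NspSet n w \ NspSet n u).card := by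
      have hsub2 : T \ NspSet n u ⊆ NspSet n w \ NspSet n u :=
        Finset.sdiff_subset_sdiff hTsub (le_refl _)
      have hsplitT : (T.filter (fun p => p ∈ NspSet n u)).card +
          (T \ NspSet n u).card = T.card := by
        rw [Finset.sdiff_eq_filter]
        exact Stmt10.filter_split T (fun p => p ∈ NspSet n u)
      have := Finset.card_le_card hsub2
      omega
    -- assemble the length count
    have hNegEq : (NegSet n w \ NegSet n u).card + (NegSet n u).card = (NegSet n w).card :=
      Finset.card_sdiff_add_card_eq_card hNegS
    have hInvEq : (InvSet n w \ InvSet n u).card + (InvSet n u).card = (InvSet n w).card :=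
      Finset.card_sdiff_add_card_eq_card hInvS
    have hNspEq : (NspSet n w \ NspSet n u).card + (NspSet n u).card = (NspSet n w).card :=
      Finset.card_sdiff_add_card_eq_card hNspS
    rw [len, len] at hlen
    omega
end

section
/- Let n ≥ 2 and let w ∈ B_n have one-line notation 1 2 ⋯ (n-2) (-n) (n-1), i.e. w(j)=j for j ≤ n-2, w(n-1)=-n, w(n)=n-1. Then ℓ(w) = 2n-2, and the only finite sequence (a_1,…,a_k) of standard generators of B_n with k ≤ 2n-2 and a_1 a_2 ⋯ a_k = w is the sequence of length 2n-2 given by (s_{n-1}, s_{n-2}, …, s_1, s_0, s_1, …, s_{n-3}, s_{n-2}); in other words, w has the unique reduced expression s_{n-1}s_{n-2}⋯s_1 s_0 s_1⋯s_{n-3}s_{n-2}. -/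
-- AUX

def Desc (u : Equiv.Perm ℤ) (j : ℕ) : Prop :=
  if j = 0 then u 1 < 0 else u ((j : ℤ) + 1) < u (j : ℤ)

lemma sGen_apply_pos (j : ℕ) (hj : j ≠ 0) (i : ℤ) :
    sGen j i = if i = (j : ℤ) then (j : ℤ) + 1 else if i = (j : ℤ) + 1 then (j : ℤ)
      else if i = -(j : ℤ) then -((j : ℤ) + 1) else if i = -((j : ℤ) + 1) then -(j : ℤ) else i := by
  have hj1 : 1 ≤ (j : ℤ) := by exact_mod_cast Nat.one_le_iff_ne_zero.2 hj
  rw [sGen, if_neg hj]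
  simp only [Equiv.Perm.mul_apply, Equiv.swap_apply_def]
  split_ifs <;> omega

lemma sGen_zero_apply (i : ℤ) :
    sGen 0 i = if i = 1 then -1 else if i = -1 then 1 else i := by
  rw [sGen, if_pos rfl, Equiv.swap_apply_def]

lemma sGen_mul_self (j : ℕ) : sGen j * sGen j = 1 := by
  ext i
  rcases eq_or_ne j 0 with rfl | hj
  · simp only [Equiv.Perm.mul_apply, Equiv.Perm.one_apply]
    rw [sGen_zero_apply i]
    split_ifs <;> rw [sGen_zero_apply] <;> split_ifs <;> first | omega | simp_all
  · have hj1 : 1 ≤ (j : ℤ) := by exact_mod_cast Nat.one_le_iff_ne_zero.2 hj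
    simp only [Equiv.Perm.mul_apply, Equiv.Perm.one_apply]
    rw [sGen_apply_pos j hj i]
    split_ifs <;> rw [sGen_apply_pos j hj] <;> split_ifs <;> first | omega | simp_all

lemma sGen_signed {n j : ℕ} (hj : j < n) : IsSignedPerm n (sGen j) := by
  rcases eq_or_ne j 0 with rfl | hj0
  · constructor
    · intro i; rw [sGen_zero_apply, sGen_zero_apply]; split_ifs <;> omega
    · intro i hi; rw [lt_abs] at hi; rw [sGen_zero_apply]; split_ifs <;> omega
  · have hj1 : 1 ≤ (j : ℤ) := by exact_mod_cast Nat.one_le_iff_ne_zero.2 hj0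
    have hjn : (j : ℤ) + 1 ≤ (n : ℤ) := by exact_mod_cast hj
    constructor
    · intro i; rw [sGen_apply_pos j hj0, sGen_apply_pos j hj0]; split_ifs <;> omega
    · intro i hi; rw [lt_abs] at hi; rw [sGen_apply_pos j hj0]; split_ifs <;> omega

lemma signed_mul {n : ℕ} {u v : Equiv.Perm ℤ} (hu : IsSignedPerm n u) (hv : IsSignedPerm n v) :
    IsSignedPerm n (u * v) := by
  constructor
  · intro i; simp only [Equiv.Perm.mul_apply, hv.1, hu.1]
  · intro i hi; simp only [Equiv.Perm.mul_apply, hv.2 i hi, hu.2 i hi]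

lemma signed_one (n : ℕ) : IsSignedPerm n 1 := ⟨fun _ => rfl, fun _ _ => rfl⟩

lemma signed_zero {n : ℕ} {u : Equiv.Perm ℤ} (hu : IsSignedPerm n u) : u 0 = 0 := by
  have := hu.1 0; simp at this; omega

lemma signed_ne_zero {n : ℕ} {u : Equiv.Perm ℤ} (hu : IsSignedPerm n u) {i : ℤ} (hi : i ≠ 0) :
    u i ≠ 0 := by
  intro h
  exact hi (u.injective (h.trans (signed_zero hu).symm))

lemma perm_ext_of_pos {u v : Equiv.Perm ℤ} (hu : ∀ i, u (-i) = -u i) (hv : ∀ i, v (-i) = -v i)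
    (h : ∀ i : ℤ, 0 < i → u i = v i) : u = v := by
  have hu0 : u 0 = 0 := by have := hu 0; simp at this; omega
  have hv0 : v 0 = 0 := by have := hv 0; simp at this; omega
  ext i
  rcases lt_trichotomy i 0 with hi | rfl | hi
  · have : u (-(-i)) = -u (-i) := hu (-i)
    have h2 : v (-(-i)) = -v (-i) := hv (-i)
    simp only [neg_neg] at this h2
    rw [this, h2, h (-i) (by omega)]
  · rw [hu0, hv0]
  · exact h i hi

lemma len_desc0 {n : ℕ} {u : Equiv.Perm ℤ} (hu : IsSignedPerm n u) (hn : 0 < n)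
    (hd : u 1 < 0) : len n u = len n (u * sGen 0) + 1 := by
  have e1 : (u * sGen 0) 1 = -u 1 := by
    rw [Equiv.Perm.mul_apply, sGen_zero_apply, if_pos rfl, ← hu.1 1]
  have e2 : ∀ i : ℤ, 2 ≤ i → (u * sGen 0) i = u i := by
    intro i hi
    rw [Equiv.Perm.mul_apply, sGen_zero_apply, if_neg (by omega), if_neg (by omega)]
  have hN : NegSet n (u * sGen 0) = (NegSet n u).erase 1 := by
    ext i
    simp only [NegSet, Finset.mem_erase, Finset.mem_filter, Finset.mem_Icc]
    constructor
    · rintro ⟨⟨hi1, hi2⟩, hlt⟩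
      have hne : i ≠ 1 := by rintro rfl; rw [e1] at hlt; omega
      rw [e2 i (by omega)] at hlt
      exact ⟨hne, ⟨hi1, hi2⟩, hlt⟩
    · rintro ⟨hne, ⟨hi1, hi2⟩, hlt⟩
      rw [e2 i (by omega)]
      exact ⟨⟨hi1, hi2⟩, hlt⟩
  have h1mem : (1 : ℤ) ∈ NegSet n u := by
    simp only [NegSet, Finset.mem_filter, Finset.mem_Icc]
    exact ⟨⟨le_refl _, by exact_mod_cast hn⟩, hd⟩
  have hNcard : (NegSet n (u * sGen 0)).card + 1 = (NegSet n u).card := by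
    rw [hN, Finset.card_erase_of_mem h1mem]
    have : 0 < (NegSet n u).card := Finset.card_pos.2 ⟨1, h1mem⟩
    omega
  have hI : InvSet n (u * sGen 0)
      = ((InvSet n u).filter fun p => ¬ p.1 = 1) ∪ ((NspSet n u).filter fun p => p.1 = 1) := by
    ext p
    simp only [InvSet, NspSet, Finset.mem_union, Finset.mem_filter, Finset.mem_product,
      Finset.mem_Icc]
    constructor
    · rintro ⟨⟨⟨ha1, ha2⟩, hb1, hb2⟩, hab, hlt⟩
      by_cases ha : p.1 = 1
      · rw [ha, e1, e2 p.2 (by omega)] at hlt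
        refine Or.inr ⟨⟨⟨⟨ha1, ha2⟩, hb1, hb2⟩, hab, ?_⟩, ha⟩
        rw [ha]
        omega
      · rw [e2 p.1 (by omega), e2 p.2 (by omega)] at hlt
        exact Or.inl ⟨⟨⟨⟨ha1, ha2⟩, hb1, hb2⟩, hab, hlt⟩, ha⟩
    · rintro (⟨⟨⟨⟨ha1, ha2⟩, hb1, hb2⟩, hab, hlt⟩, ha⟩ | ⟨⟨⟨⟨ha1, ha2⟩, hb1, hb2⟩, hab, hlt⟩, ha⟩)
      · rw [← e2 p.1 (by omega), ← e2 p.2 (by omega)] at hlt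
        exact ⟨⟨⟨ha1, ha2⟩, hb1, hb2⟩, hab, hlt⟩
      · refine ⟨⟨⟨ha1, ha2⟩, hb1, hb2⟩, hab, ?_⟩
        rw [ha, e1, e2 p.2 (by omega)]
        rw [ha] at hlt
        omega
  have hS : NspSet n (u * sGen 0)
      = ((NspSet n u).filter fun p => ¬ p.1 = 1) ∪ ((InvSet n u).filter fun p => p.1 = 1) := by
    ext p
    simp only [InvSet, NspSet, Finset.mem_union, Finset.mem_filter, Finset.mem_product,
      Finset.mem_Icc]
    constructor
    · rintro ⟨⟨⟨ha1, ha2⟩, hb1, hb2⟩, hab, hlt⟩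
      by_cases ha : p.1 = 1
      · rw [ha, e1, e2 p.2 (by omega)] at hlt
        refine Or.inr ⟨⟨⟨⟨ha1, ha2⟩, hb1, hb2⟩, hab, ?_⟩, ha⟩
        rw [ha]
        omega
      · rw [e2 p.1 (by omega), e2 p.2 (by omega)] at hlt
        exact Or.inl ⟨⟨⟨⟨ha1, ha2⟩, hb1, hb2⟩, hab, hlt⟩, ha⟩
    · rintro (⟨⟨⟨⟨ha1, ha2⟩, hb1, hb2⟩, hab, hlt⟩, ha⟩ | ⟨⟨⟨⟨ha1, ha2⟩, hb1, hb2⟩, hab, hlt⟩, ha⟩)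
      · rw [← e2 p.1 (by omega), ← e2 p.2 (by omega)] at hlt
        exact ⟨⟨⟨ha1, ha2⟩, hb1, hb2⟩, hab, hlt⟩
      · refine ⟨⟨⟨ha1, ha2⟩, hb1, hb2⟩, hab, ?_⟩
        rw [ha, e1, e2 p.2 (by omega)]
        rw [ha] at hlt
        omega
  have hdisj : ∀ s t : Finset (ℤ × ℤ), Disjoint (s.filter fun p => ¬ p.1 = 1)
      (t.filter fun p => p.1 = (1:ℤ)) := by
    intro s t
    rw [Finset.disjoint_left]
    rintro p hp hq
    simp only [Finset.mem_filter] at hp hq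
    exact hp.2 hq.2
  have cI := Finset.card_filter_add_card_filter_not
    (s := InvSet n u) (p := fun p => p.1 = (1:ℤ))
  have cS := Finset.card_filter_add_card_filter_not
    (s := NspSet n u) (p := fun p => p.1 = (1:ℤ))
  have cI' : (InvSet n (u * sGen 0)).card
      = ((InvSet n u).filter fun p => ¬ p.1 = 1).card
        + ((NspSet n u).filter fun p => p.1 = (1:ℤ)).card := by
    rw [hI, Finset.card_union_of_disjoint (hdisj _ _)]
  have cS' : (NspSet n (u * sGen 0)).card
      = ((NspSet n u).filter fun p => ¬ p.1 = 1).card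
        + ((InvSet n u).filter fun p => p.1 = (1:ℤ)).card := by
    rw [hS, Finset.card_union_of_disjoint (hdisj _ _)]
  unfold len
  omega

def sortPair (J : ℤ) (σ : Equiv.Perm ℤ) (p : ℤ × ℤ) : ℤ × ℤ :=
  if p.1 = J ∧ p.2 = J + 1 then p else (σ p.1, σ p.2)

lemma len_desc_pos {n : ℕ} (u : Equiv.Perm ℤ) {j : ℕ} (hj0 : j ≠ 0) (hj : j < n)
    (hd : u ((j : ℤ) + 1) < u (j : ℤ)) : len n u = len n (u * sGen j) + 1 := by
  set J : ℤ := (j : ℤ) with hJ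
  have hj0' : 1 ≤ j := Nat.one_le_iff_ne_zero.2 hj0
  have hJ1 : 1 ≤ J := by omega
  have hJn : J + 1 ≤ (n : ℤ) := by omega
  set σ : Equiv.Perm ℤ := Equiv.swap J (J + 1) with hσ
  have hkey : ∀ i : ℤ, 1 ≤ i → (u * sGen j) i = u (σ i) := by
    intro i hi
    rw [Equiv.Perm.mul_apply]
    congr 1
    rw [sGen_apply_pos j hj0, hσ, Equiv.swap_apply_def]
    split_ifs <;> omega
  have hσdef : ∀ i : ℤ, σ i = if i = J then J + 1 else if i = J + 1 then J else i := by
    intro i; rw [hσ, Equiv.swap_apply_def]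
  have hσmem : ∀ i : ℤ, 1 ≤ i ∧ i ≤ (n : ℤ) → 1 ≤ σ i ∧ σ i ≤ (n : ℤ) := by
    intro i hi; rw [hσdef]; split_ifs <;> omega
  have hσσ : ∀ i, σ (σ i) = i := fun i => Equiv.swap_apply_self _ _ i
  have hσord : ∀ a b : ℤ, a < b → ¬(a = J ∧ b = J + 1) → σ a < σ b := by
    intro a b hab hne
    rw [hσdef, hσdef]
    by_cases h1 : a = J <;> by_cases h2 : b = J + 1 <;> split_ifs <;> omega
  -- NegSet
  have hN : NegSet n (u * sGen j) = (NegSet n u).image σ := by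
    ext i
    simp only [NegSet, Finset.mem_image, Finset.mem_filter, Finset.mem_Icc]
    constructor
    · rintro ⟨hi, hlt⟩
      rw [hkey i hi.1] at hlt
      exact ⟨σ i, ⟨hσmem i hi, hlt⟩, hσσ i⟩
    · rintro ⟨a, ⟨ha, hlt⟩, rfl⟩
      refine ⟨hσmem a ha, ?_⟩
      rw [hkey (σ a) (hσmem a ha).1, hσσ a]
      exact hlt
  have hNcard : (NegSet n (u * sGen j)).card = (NegSet n u).card := by
    rw [hN, Finset.card_image_of_injective _ σ.injective]
  -- the sorting involution
  have htpos : ∀ p : ℤ × ℤ, p.1 = J ∧ p.2 = J + 1 → sortPair J σ p = p := by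
    intro p hp; rw [sortPair, if_pos hp]
  have htneg : ∀ p : ℤ × ℤ, ¬(p.1 = J ∧ p.2 = J + 1) → sortPair J σ p = (σ p.1, σ p.2) := by
    intro p hp; rw [sortPair, if_neg hp]
  have htt : ∀ p : ℤ × ℤ, p.1 < p.2 → sortPair J σ (sortPair J σ p) = p := by
    intro p hp
    by_cases hsp : p.1 = J ∧ p.2 = J + 1
    · rw [htpos p hsp, htpos p hsp]
    · rw [htneg p hsp]
      have hns : ¬(σ p.1 = J ∧ σ p.2 = J + 1) := by
        rintro ⟨hA, hB⟩
        rw [hσdef] at hA hB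
        split_ifs at hA hB <;> omega
      rw [htneg _ hns]
      simp only [hσσ]
  have hval : ∀ a : ℤ, 1 ≤ a → (u * sGen j) (σ a) = u a := by
    intro a ha
    by_cases h : 1 ≤ σ a
    · rw [hkey (σ a) h, hσσ]
    · exfalso; rw [hσdef] at h; split_ifs at h <;> omega
  -- Nsp cardinality
  have hScard : (NspSet n (u * sGen j)).card = (NspSet n u).card := by
    refine Finset.card_bij' (fun p _ => sortPair J σ p) (fun p _ => sortPair J σ p) ?_ ?_ ?_ ?_
    · intro p hp
      simp only [NspSet, Finset.mem_filter, Finset.mem_product, Finset.mem_Icc] at hp ⊢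
      obtain ⟨⟨hb1, hb2⟩, hc, hv⟩ := hp
      by_cases hsp : p.1 = J ∧ p.2 = J + 1
      · rw [htpos p hsp]
        refine ⟨⟨hb1, hb2⟩, hc, ?_⟩
        rw [hkey p.1 hb1.1, hkey p.2 hb2.1] at hv
        obtain ⟨hA, hB⟩ := hsp
        rw [hA, hB] at hv ⊢
        rw [hσ, Equiv.swap_apply_left, Equiv.swap_apply_right] at hv
        omega
      · rw [htneg p hsp]
        rw [hkey p.1 hb1.1, hkey p.2 hb2.1] at hv
        exact ⟨⟨hσmem _ hb1, hσmem _ hb2⟩, hσord _ _ hc hsp, hv⟩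
    · intro p hp
      simp only [NspSet, Finset.mem_filter, Finset.mem_product, Finset.mem_Icc] at hp ⊢
      obtain ⟨⟨hb1, hb2⟩, hc, hv⟩ := hp
      by_cases hsp : p.1 = J ∧ p.2 = J + 1
      · rw [htpos p hsp]
        refine ⟨⟨hb1, hb2⟩, hc, ?_⟩
        obtain ⟨hA, hB⟩ := hsp
        rw [hA, hB] at hv ⊢
        rw [hkey J hJ1, hkey (J + 1) (by omega), hσ, Equiv.swap_apply_left,
          Equiv.swap_apply_right]
        omega
      · rw [htneg p hsp]
        refine ⟨⟨hσmem _ hb1, hσmem _ hb2⟩, hσord _ _ hc hsp, ?_⟩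
        rw [hval p.1 hb1.1, hval p.2 hb2.1]
        exact hv
    · intro p hp
      simp only [NspSet, Finset.mem_filter, Finset.mem_product, Finset.mem_Icc] at hp
      exact htt p hp.2.1
    · intro p hp
      simp only [NspSet, Finset.mem_filter, Finset.mem_product, Finset.mem_Icc] at hp
      exact htt p hp.2.1
  -- Inv cardinality
  have hJJmem : ((J, J + 1) : ℤ × ℤ) ∈ InvSet n u := by
    simp only [InvSet, Finset.mem_filter, Finset.mem_product, Finset.mem_Icc]
    exact ⟨⟨⟨hJ1, by omega⟩, by omega, hJn⟩, by omega, hd⟩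
  have hIcard : (InvSet n (u * sGen j)).card = ((InvSet n u).erase (J, J + 1)).card := by
    refine Finset.card_bij' (fun p _ => sortPair J σ p) (fun p _ => sortPair J σ p) ?_ ?_ ?_ ?_
    · intro p hp
      simp only [InvSet, Finset.mem_filter, Finset.mem_product, Finset.mem_Icc] at hp
      obtain ⟨⟨hb1, hb2⟩, hc, hv⟩ := hp
      rw [hkey p.1 hb1.1, hkey p.2 hb2.1] at hv
      have hsp : ¬(p.1 = J ∧ p.2 = J + 1) := by
        rintro ⟨hA, hB⟩
        rw [hA, hB, hσ, Equiv.swap_apply_left, Equiv.swap_apply_right] at hv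
        omega
      rw [Finset.mem_erase, htneg p hsp]
      constructor
      · rintro heq
        rw [Prod.ext_iff] at heq
        obtain ⟨hA, hB⟩ := heq
        simp only [hσdef] at hA hB
        split_ifs at hA hB <;> omega
      · simp only [InvSet, Finset.mem_filter, Finset.mem_product, Finset.mem_Icc]
        exact ⟨⟨hσmem _ hb1, hσmem _ hb2⟩, hσord _ _ hc hsp, hv⟩
    · intro p hp
      rw [Finset.mem_erase] at hp
      obtain ⟨hne, hp⟩ := hp
      simp only [InvSet, Finset.mem_filter, Finset.mem_product, Finset.mem_Icc] at hp ⊢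
      obtain ⟨⟨hb1, hb2⟩, hc, hv⟩ := hp
      have hsp : ¬(p.1 = J ∧ p.2 = J + 1) := by
        rintro ⟨hA, hB⟩
        exact hne (Prod.ext_iff.2 ⟨hA, hB⟩)
      rw [htneg p hsp]
      refine ⟨⟨hσmem _ hb1, hσmem _ hb2⟩, hσord _ _ hc hsp, ?_⟩
      rw [hval p.1 hb1.1, hval p.2 hb2.1]
      exact hv
    · intro p hp
      simp only [InvSet, Finset.mem_filter, Finset.mem_product, Finset.mem_Icc] at hp
      exact htt p hp.2.1
    · intro p hp
      rw [Finset.mem_erase] at hp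
      simp only [InvSet, Finset.mem_filter, Finset.mem_product, Finset.mem_Icc] at hp
      exact htt p hp.2.2.1
  rw [Finset.card_erase_of_mem hJJmem] at hIcard
  have hpos : 0 < (InvSet n u).card := Finset.card_pos.2 ⟨_, hJJmem⟩
  unfold len
  omega

lemma len_desc {n : ℕ} {u : Equiv.Perm ℤ} (hu : IsSignedPerm n u) {j : ℕ} (hj : j < n)
    (hd : Desc u j) : len n u = len n (u * sGen j) + 1 := by
  rcases eq_or_ne j 0 with rfl | hj0
  · rw [Desc, if_pos rfl] at hd
    exact len_desc0 hu hj hd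
  · rw [Desc, if_neg hj0] at hd
    exact len_desc_pos u hj0 hj hd

lemma desc_mul_iff {n : ℕ} {u : Equiv.Perm ℤ} (hu : IsSignedPerm n u) (j : ℕ) :
    Desc (u * sGen j) j ↔ ¬ Desc u j := by
  rcases eq_or_ne j 0 with rfl | hj0
  · rw [Desc, Desc, if_pos rfl, if_pos rfl, Equiv.Perm.mul_apply, sGen_zero_apply,
      if_pos rfl, hu.1 1]
    have h0 : u 1 ≠ 0 := signed_ne_zero hu (by omega)
    constructor <;> intro h <;> omega
  · have e1 : (u * sGen j) ((j : ℤ) + 1) = u (j : ℤ) := by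
      rw [Equiv.Perm.mul_apply, sGen_apply_pos j hj0]
      have hj1 : 1 ≤ (j : ℤ) := by exact_mod_cast Nat.one_le_iff_ne_zero.2 hj0
      rw [if_neg (by omega), if_pos rfl]
    have e2 : (u * sGen j) (j : ℤ) = u ((j : ℤ) + 1) := by
      rw [Equiv.Perm.mul_apply, sGen_apply_pos j hj0, if_pos rfl]
    rw [Desc, Desc, if_neg hj0, if_neg hj0, e1, e2]
    have hne : u ((j : ℤ) + 1) ≠ u (j : ℤ) := by
      intro h; have := u.injective h; omega
    constructor <;> intro h <;> omega

lemma len_asc {n : ℕ} {u : Equiv.Perm ℤ} (hu : IsSignedPerm n u) {j : ℕ} (hj : j < n)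
    (hd : ¬ Desc u j) : len n (u * sGen j) = len n u + 1 := by
  have h1 : Desc (u * sGen j) j := (desc_mul_iff hu j).2 hd
  have h2 := len_desc (signed_mul hu (sGen_signed hj)) hj h1
  rw [mul_assoc, sGen_mul_self, mul_one] at h2
  omega

lemma len_one (n : ℕ) : len n 1 = 0 := by
  have h1 : NegSet n 1 = ∅ := by
    ext i; simp only [NegSet, Finset.mem_filter, Finset.mem_Icc, Finset.notMem_empty,
      iff_false, Equiv.Perm.one_apply]
    intro h; obtain ⟨hm, h3⟩ := Finset.mem_filter.1 h
    rw [Finset.mem_Icc] at hm; omega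
  have h2 : InvSet n 1 = ∅ := by
    ext p; simp only [InvSet, Finset.mem_filter, Finset.mem_product, Finset.mem_Icc,
      Finset.notMem_empty, iff_false, Equiv.Perm.one_apply]
    intro h; obtain ⟨hm, h3, h4⟩ := Finset.mem_filter.1 h
    simp only [Finset.mem_product, Finset.mem_Icc, Equiv.Perm.one_apply] at hm h4; omega
  have h3 : NspSet n 1 = ∅ := by
    ext p; simp only [NspSet, Finset.mem_filter, Finset.mem_product, Finset.mem_Icc,
      Finset.notMem_empty, iff_false, Equiv.Perm.one_apply]
    intro h; obtain ⟨hm, h3, h4⟩ := Finset.mem_filter.1 h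
    simp only [Finset.mem_product, Finset.mem_Icc, Equiv.Perm.one_apply] at hm h4; omega
  rw [len, h1, h2, h3]
  simp

lemma len_mul_le {n : ℕ} {u : Equiv.Perm ℤ} (hu : IsSignedPerm n u) {j : ℕ} (hj : j < n) :
    len n (u * sGen j) ≤ len n u + 1 := by
  by_cases hd : Desc u j
  · have := len_desc hu hj hd; omega
  · have := len_asc hu hj hd; omega

lemma prod_signed {n : ℕ} : ∀ L : List ℕ, (∀ j ∈ L, j < n) → IsSignedPerm n (L.map sGen).prod := by
  intro L
  induction L with
  | nil => intro _; simpa using signed_one n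
  | cons a L ih =>
    intro h
    rw [List.map_cons, List.prod_cons]
    exact signed_mul (sGen_signed (h a (by simp))) (ih fun j hj => h j (by simp [hj]))

lemma len_prod_le {n : ℕ} : ∀ L : List ℕ, (∀ j ∈ L, j < n) →
    len n ((L.map sGen).prod) ≤ L.length := by
  intro L
  induction L using List.reverseRecOn with
  | nil => intro _; simpa using Nat.le_of_eq (len_one n)
  | append_singleton L a ih =>
    intro h
    rw [List.map_append, List.prod_append, List.map_singleton, List.prod_singleton]
    have h1 : ∀ j ∈ L, j < n := fun j hj => h j (by simp [hj])
    have h2 := len_mul_le (prod_signed L h1) (h a (by simp))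
    have h3 := ih h1
    simp only [List.length_append, List.length_singleton]
    omega

def extOdd (f : ℤ → ℤ) : ℤ → ℤ := fun i => if 0 < i then f i else if i < 0 then -(f (-i)) else 0

lemma extOdd_neg (f : ℤ → ℤ) (i : ℤ) : extOdd f (-i) = -(extOdd f i) := by
  simp only [extOdd, neg_neg]
  split_ifs <;> omega

lemma extOdd_leftInverse {f g : ℤ → ℤ}
    (h : ∀ i : ℤ, 0 < i → (0 < f i → g (f i) = i) ∧ (f i < 0 → g (-(f i)) = -i) ∧ f i ≠ 0) :
    Function.LeftInverse (extOdd g) (extOdd f) := by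
  have hpos : ∀ i : ℤ, 0 < i → extOdd g (extOdd f i) = i := by
    intro i hi
    obtain ⟨h1, h2, h3⟩ := h i hi
    simp only [extOdd, if_pos hi]
    rcases lt_or_gt_of_ne h3 with hf | hf
    · rw [if_neg (by omega), if_pos hf, h2 hf]
      omega
    · rw [if_pos hf]
      exact h1 hf
  intro i
  rcases lt_trichotomy i 0 with hi | rfl | hi
  · have := hpos (-i) (by omega)
    rw [← neg_neg i, extOdd_neg, extOdd_neg, this]
  · simp [extOdd]
  · exact hpos i hi

def chainF (n k : ℕ) : ℤ → ℤ := fun i =>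
  if k < n then
    (if i = (n : ℤ) - k then (n : ℤ) else if (n : ℤ) - k < i ∧ i ≤ (n : ℤ) then i - 1 else i)
  else
    (if i = (k : ℤ) - n + 1 then -(n : ℤ)
      else if (k : ℤ) - n + 1 < i ∧ i ≤ (n : ℤ) then i - 1 else i)

def chainG (n k : ℕ) : ℤ → ℤ := fun i =>
  if k < n then
    (if i = (n : ℤ) then (n : ℤ) - k
      else if (n : ℤ) - k ≤ i ∧ i ≤ (n : ℤ) - 1 then i + 1 else i)
  else
    (if i = (n : ℤ) then -((k : ℤ) - n + 1)
      else if (k : ℤ) - n + 1 ≤ i ∧ i ≤ (n : ℤ) - 1 then i + 1 else i)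

def chainPerm (n k : ℕ) : Equiv.Perm ℤ :=
  if h : 2 ≤ n ∧ k ≤ 2 * n - 2 then
    { toFun := extOdd (chainF n k)
      invFun := extOdd (chainG n k)
      left_inv := by
        apply extOdd_leftInverse
        intro i hi
        obtain ⟨hn, hk⟩ := h
        refine ⟨?_, ?_, ?_⟩
        · intro hf; simp only [chainF, chainG] at *; split_ifs at * <;> omega
        · intro hf; simp only [chainF, chainG] at *; split_ifs at * <;> omega
        · simp only [chainF]; split_ifs <;> omega
      right_inv := by
        apply extOdd_leftInverse
        intro i hi
        obtain ⟨hn, hk⟩ := h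
        refine ⟨?_, ?_, ?_⟩
        · intro hf; simp only [chainF, chainG] at *; split_ifs at * <;> omega
        · intro hf; simp only [chainF, chainG] at *; split_ifs at * <;> omega
        · simp only [chainG]; split_ifs <;> omega }
  else 1

lemma chainPerm_apply {n k : ℕ} (h1 : 2 ≤ n) (h2 : k ≤ 2 * n - 2) (i : ℤ) :
    chainPerm n k i = extOdd (chainF n k) i := by
  rw [chainPerm, dif_pos ⟨h1, h2⟩]; rfl

lemma chainPerm_signed {n k : ℕ} (h1 : 2 ≤ n) (h2 : k ≤ 2 * n - 2) :
    IsSignedPerm n (chainPerm n k) := by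
  constructor
  · intro i
    rw [chainPerm_apply h1 h2, chainPerm_apply h1 h2]
    exact extOdd_neg _ i
  · intro i hi
    rw [lt_abs] at hi
    rw [chainPerm_apply h1 h2]
    simp only [extOdd, chainF]
    split_ifs <;> omega

lemma chainPerm_zero {n : ℕ} (h1 : 2 ≤ n) : chainPerm n 0 = 1 := by
  ext i
  rw [chainPerm_apply h1 (by omega), Equiv.Perm.one_apply]
  simp only [extOdd, chainF]
  split_ifs <;> omega

def dIdx (n k : ℕ) : ℕ := if k < n then n - k else k - n

lemma dIdx_lt {n k : ℕ} (h1 : 2 ≤ n) (hk1 : 1 ≤ k) (hk2 : k ≤ 2 * n - 2) : dIdx n k < n := by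
  rw [dIdx]; split_ifs <;> omega

lemma chainPerm_desc_iff {n k : ℕ} (h1 : 2 ≤ n) (hk1 : 1 ≤ k) (hk2 : k ≤ 2 * n - 2)
    {j : ℕ} (hj : j < n) : Desc (chainPerm n k) j ↔ j = dIdx n k := by
  rw [Desc, dIdx]
  rcases eq_or_ne j 0 with rfl | hj0
  · rw [if_pos rfl, chainPerm_apply h1 hk2]
    simp only [extOdd, chainF]
    split_ifs <;> omega
  · rw [if_neg hj0, chainPerm_apply h1 hk2, chainPerm_apply h1 hk2]
    have hj1 : 1 ≤ j := Nat.one_le_iff_ne_zero.2 hj0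
    simp only [extOdd, chainF]
    split_ifs <;> omega

set_option maxHeartbeats 2000000 in
lemma chainPerm_step {n k : ℕ} (h1 : 2 ≤ n) (hk1 : 1 ≤ k) (hk2 : k ≤ 2 * n - 2) :
    chainPerm n k * sGen (dIdx n k) = chainPerm n (k - 1) := by
  have hd := dIdx_lt h1 hk1 hk2
  apply perm_ext_of_pos
  · exact (signed_mul (chainPerm_signed h1 hk2) (sGen_signed hd)).1
  · exact (chainPerm_signed h1 (by omega)).1
  · intro i hi
    rw [Equiv.Perm.mul_apply]
    by_cases hkn : k = n
    · have hd0 : dIdx n k = 0 := by rw [dIdx]; split_ifs <;> omega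
      rw [hd0, sGen_zero_apply i]
      by_cases hi1 : i = 1
      · rw [if_pos hi1, (chainPerm_signed h1 hk2).1 1, hi1,
          chainPerm_apply h1 hk2, chainPerm_apply h1 (by omega)]
        simp only [extOdd, chainF]
        split_ifs <;> omega
      · rw [if_neg hi1, if_neg (by omega),
          chainPerm_apply h1 hk2, chainPerm_apply h1 (by omega)]
        simp only [extOdd, chainF]
        split_ifs <;> omega
    · have hd0 : dIdx n k ≠ 0 := by rw [dIdx]; split_ifs <;> omega
      have hd1 : 1 ≤ (dIdx n k : ℤ) := by exact_mod_cast Nat.one_le_iff_ne_zero.2 hd0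
      by_cases hkn2 : k < n
      · have hdval : (dIdx n k : ℤ) = (n : ℤ) - k := by rw [dIdx, if_pos hkn2]; omega
        rw [sGen_apply_pos _ hd0 i, hdval,
          chainPerm_apply h1 hk2, chainPerm_apply h1 (by omega)]
        simp only [extOdd, chainF]
        split_ifs <;> omega
      · have hdval : (dIdx n k : ℤ) = (k : ℤ) - n := by rw [dIdx, if_neg hkn2]; omega
        rw [sGen_apply_pos _ hd0 i, hdval,
          chainPerm_apply h1 hk2, chainPerm_apply h1 (by omega)]
        simp only [extOdd, chainF]
        split_ifs <;> omega

lemma desc_one_false (n j : ℕ) : ¬ Desc (1 : Equiv.Perm ℤ) j := by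
  rw [Desc]
  split_ifs <;> simp [Equiv.Perm.one_apply]

lemma chainPerm_len {n : ℕ} (h1 : 2 ≤ n) : ∀ k, k ≤ 2 * n - 2 → len n (chainPerm n k) = k := by
  intro k
  induction k with
  | zero => intro _; rw [chainPerm_zero h1]; exact len_one n
  | succ k ih =>
    intro hk
    have hstep := chainPerm_step h1 (k := k + 1) (by omega) hk
    rw [Nat.add_sub_cancel] at hstep
    have heq : chainPerm n (k + 1) = chainPerm n k * sGen (dIdx n (k + 1)) := by
      rw [← hstep, mul_assoc, sGen_mul_self, mul_one]
    have hdlt := dIdx_lt h1 (k := k + 1) (by omega) hk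
    have hnd : ¬ Desc (chainPerm n k) (dIdx n (k + 1)) := by
      rcases Nat.eq_zero_or_pos k with rfl | hkpos
      · rw [chainPerm_zero h1]; exact desc_one_false n _
      · rw [chainPerm_desc_iff h1 hkpos (by omega) hdlt]
        simp only [dIdx]
        split_ifs <;> omega
    have := len_asc (chainPerm_signed h1 (by omega)) hdlt hnd
    rw [heq, this, ih (by omega)]

def canon (n : ℕ) : List ℕ := (List.range n).reverse ++ (List.range (n - 1)).drop 1

lemma canon_length {n : ℕ} (h1 : 2 ≤ n) : (canon n).length = 2 * n - 2 := by
  simp [canon]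
  omega

lemma canon_getElem {n : ℕ} (h1 : 2 ≤ n) (k : ℕ) (hk1 : 1 ≤ k) (hk2 : k ≤ 2 * n - 2)
    (hh : k - 1 < (canon n).length) : (canon n)[k - 1] = dIdx n k := by
  simp only [canon] at hh ⊢
  by_cases hkn : k - 1 < n
  · rw [List.getElem_append_left (by simpa using hkn), List.getElem_reverse]
    simp only [List.getElem_range, List.length_range]
    rw [dIdx]
    split_ifs <;> omega
  · rw [List.getElem_append_right (by simpa using hkn), List.getElem_drop]
    simp only [List.getElem_range, List.length_reverse, List.length_range]
    rw [dIdx]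
    split_ifs <;> omega

lemma canon_take_succ {n : ℕ} (h1 : 2 ≤ n) (k : ℕ) (hk1 : 1 ≤ k) (hk2 : k ≤ 2 * n - 2) :
    (canon n).take k = (canon n).take (k - 1) ++ [dIdx n k] := by
  have hlt : k - 1 < (canon n).length := by rw [canon_length h1]; omega
  conv_lhs => rw [show k = (k - 1) + 1 by omega]
  rw [List.take_succ, List.getElem?_eq_getElem hlt, canon_getElem h1 k hk1 hk2 hlt]
  rfl

lemma main_induction {n : ℕ} (h1 : 2 ≤ n) :
    ∀ k, k ≤ 2 * n - 2 → ∀ L : List ℕ, (∀ j ∈ L, j < n) → L.length = k →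
      (L.map sGen).prod = chainPerm n k → L = (canon n).take k := by
  intro k
  induction k with
  | zero =>
    intro _ L _ hlen _
    rw [List.length_eq_zero_iff] at hlen
    simp [hlen]
  | succ k ih =>
    intro hk L hmem hlen hprod
    rcases L.eq_nil_or_concat' with rfl | ⟨L', a, rfl⟩
    · simp at hlen
    · have hmem' : ∀ j ∈ L', j < n := fun j hj => hmem j (by simp [hj])
      have ha : a < n := hmem a (by simp)
      have hlen' : L'.length = k := by simp at hlen; omega
      rw [List.map_append, List.prod_append, List.map_singleton, List.prod_singleton] at hprod
      -- len of the prefix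
      have hlchain := chainPerm_len h1 (k + 1) hk
      have hsig' := prod_signed L' hmem'
      have hlbound := len_prod_le L' hmem'
      have hles := len_mul_le hsig' ha
      rw [hprod, hlchain] at hles
      have hP' : (L'.map sGen).prod = chainPerm n (k + 1) * sGen a := by
        rw [← hprod, mul_assoc, sGen_mul_self, mul_one]
      -- len (chainPerm (k+1) * sGen a) ≤ k so a is a descent
      have hlen2 : len n (chainPerm n (k + 1) * sGen a) ≤ k := by
        rw [← hP']; rw [hlen'] at hlbound; exact hlbound
      have hdesc : Desc (chainPerm n (k + 1)) a := by
        by_contra hnd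
        have := len_asc (chainPerm_signed h1 hk) ha hnd
        omega
      have hadIdx : a = dIdx n (k + 1) :=
        (chainPerm_desc_iff h1 (by omega) hk ha).1 hdesc
      have hstep := chainPerm_step h1 (k := k + 1) (by omega) hk
      rw [Nat.add_sub_cancel] at hstep
      have hP'' : (L'.map sGen).prod = chainPerm n k := by
        rw [hP', hadIdx, hstep]
      have hL' := ih (by omega) L' hmem' hlen' hP''
      have hts := canon_take_succ h1 (k + 1) (by omega) hk
      rw [Nat.add_sub_cancel] at hts
      rw [hL', hadIdx, ← hts]

/-- The element `w = 1 2 ⋯ (n-2) (-n) (n-1)` of `B_n` has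
`ℓ(w) = 2n-2` and unique reduced expression `s_{n-1}⋯s_1 s_0 s_1⋯s_{n-2}`. -/
theorem unique_reduced_expression (n : ℕ) (hn : 2 ≤ n) (w : Equiv.Perm ℤ)
    (hw : IsSignedPerm n w)
    (hfix : ∀ j : ℤ, 1 ≤ j → j ≤ (n : ℤ) - 2 → w j = j)
    (h1 : w ((n : ℤ) - 1) = -(n : ℤ)) (h2 : w (n : ℤ) = (n : ℤ) - 1) :
    len n w = 2 * n - 2 ∧
    ∀ L : List ℕ, (∀ j ∈ L, j < n) → L.length ≤ 2 * n - 2 → (L.map sGen).prod = w →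
      L = (List.range n).reverse ++ (List.range (n - 1)).drop 1 := by
  have hweq : w = chainPerm n (2 * n - 2) := by
    apply perm_ext_of_pos hw.1 (chainPerm_signed hn le_rfl).1
    intro i hi
    rw [chainPerm_apply hn le_rfl]
    simp only [extOdd, chainF]
    by_cases hin : (n : ℤ) < i
    · rw [hw.2 i (by rw [lt_abs]; omega)]
      split_ifs <;> omega
    · by_cases hi1 : i = (n : ℤ) - 1
      · rw [hi1, h1]; split_ifs <;> omega
      · by_cases hi2 : i = (n : ℤ)
        · rw [hi2, h2]; split_ifs <;> omega
        · rw [hfix i hi (by omega)]; split_ifs <;> omega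
  constructor
  · rw [hweq]; exact chainPerm_len hn _ le_rfl
  · intro L hmem hlen hprod
    have hlb := len_prod_le L hmem
    rw [hprod, hweq, chainPerm_len hn _ le_rfl] at hlb
    have hlen2 : L.length = 2 * n - 2 := le_antisymm hlen hlb
    have hfin := main_induction hn (2 * n - 2) le_rfl L hmem hlen2 (by rw [hprod, hweq])
    rw [hfin, List.take_of_length_le (le_of_eq (canon_length hn))]
    rfl
end

section
/- Let u ∈ B_n and U = [e,u]_R. If the pair (B_n/U, U) is a splitting of B_n, then U is rank-symmetric: for all 0 ≤ d ≤ ℓ(u), #{x ≤_R u : ℓ(x) = d} = #{x ≤_R u : ℓ(x) = ℓ(u)-d}. -/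
namespace SPAux
open Finset Polynomial

variable {n m : ℕ} {w v : Equiv.Perm ℤ}

lemma sp_one (n : ℕ) : IsSignedPerm n 1 := ⟨fun i => rfl, fun i _ => rfl⟩

lemma sp_mul (h1 : IsSignedPerm n w) (h2 : IsSignedPerm n v) : IsSignedPerm n (w * v) := by
  refine ⟨fun i => ?_, fun i hi => ?_⟩
  · simp [Equiv.Perm.mul_apply, h2.1, h1.1]
  · simp [Equiv.Perm.mul_apply, h2.2 i hi, h1.2 i hi]

lemma sp_inv (h : IsSignedPerm n w) : IsSignedPerm n w⁻¹ := by
  refine ⟨fun i => w.injective ?_, fun i hi => ?_⟩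
  · rw [Equiv.Perm.inv_def, Equiv.apply_symm_apply, h.1, Equiv.apply_symm_apply]
  · have := h.2 i hi
    exact w.injective (by rw [Equiv.Perm.inv_def, Equiv.apply_symm_apply, this])

lemma sp_zero (h : IsSignedPerm n w) : w 0 = 0 := by
  have := h.1 0
  simp at this
  omega

lemma sp_abs_le (h : IsSignedPerm n w) {i : ℤ} (hi : |i| ≤ n) : |w i| ≤ n := by
  by_contra hc
  push_neg at hc
  have h2 := h.2 (w i) hc
  have h3 := w.injective h2
  rw [h3] at hc
  omega

lemma sp_ne_zero (h : IsSignedPerm n w) {i : ℤ} (hi : i ≠ 0) : w i ≠ 0 := by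
  intro hz
  exact hi (w.injective (hz.trans (sp_zero h).symm))

lemma sp_mono (h : IsSignedPerm m w) (hmn : m ≤ n) : IsSignedPerm n w :=
  ⟨h.1, fun i hi => h.2 i (by omega)⟩


lemma len_one (n : ℕ) : len n 1 = 0 := by
  have h1 : NegSet n 1 = ∅ := by
    apply Finset.filter_false_of_mem
    intro i hi
    simp only [Finset.mem_Icc] at hi
    simp only [Equiv.Perm.one_apply]
    omega
  have h2 : InvSet n 1 = ∅ := by
    apply Finset.filter_false_of_mem
    intro p hp
    simp only [Equiv.Perm.one_apply]
    omega
  have h3 : NspSet n 1 = ∅ := by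
    apply Finset.filter_false_of_mem
    intro p hp
    simp only [Finset.mem_product, Finset.mem_Icc] at hp
    simp only [Equiv.Perm.one_apply]
    omega
  simp [len, h1, h2, h3]

lemma len_eq_zero (h : IsSignedPerm n w) (hl : len n w = 0) : w = 1 := by
  have hc : NegSet n w = ∅ ∧ InvSet n w = ∅ := by
    unfold len at hl
    constructor <;> rw [← Finset.card_eq_zero] <;> omega
  have hneg : ∀ i : ℤ, 1 ≤ i → i ≤ n → 0 < w i := by
    intro i h1 h2
    have hni : i ∉ NegSet n w := by rw [hc.1]; exact Finset.notMem_empty i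
    rw [NegSet, Finset.mem_filter, Finset.mem_Icc] at hni
    push_neg at hni
    have := sp_ne_zero h (show i ≠ 0 by omega)
    have := hni ⟨h1, h2⟩
    omega
  have hmono : ∀ i j : ℤ, 1 ≤ i → i < j → j ≤ n → w i < w j := by
    intro i j h1 h2 h3
    have hni : (i, j) ∉ InvSet n w := by rw [hc.2]; exact Finset.notMem_empty _
    rw [InvSet, Finset.mem_filter, Finset.mem_product, Finset.mem_Icc, Finset.mem_Icc] at hni
    push_neg at hni
    dsimp only at hni
    have hne : w i ≠ w j := fun he => by have := w.injective he; omega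
    have := hni ⟨⟨by omega, by omega⟩, ⟨by omega, by omega⟩⟩ h2
    omega
  have hlow : ∀ k : ℕ, (1 + k : ℤ) ≤ n → (1 + k : ℤ) ≤ w (1 + k) := by
    intro k
    induction k with
    | zero => intro hk; have := hneg 1 le_rfl (by omega); simp; omega
    | succ m ih =>
      intro hk
      have h1 : w (1 + m) < w (1 + (m + 1 : ℕ)) := by
        apply hmono <;> push_cast <;> omega
      have h2 := ih (by push_cast at hk ⊢; omega)
      push_cast at h1 h2 ⊢
      omega
  have hupp : ∀ k : ℕ, 1 ≤ (n : ℤ) - k → w ((n : ℤ) - k) ≤ (n : ℤ) - k := by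
    intro k
    induction k with
    | zero =>
      intro hk
      have habs := sp_abs_le h (show |(n:ℤ)| ≤ n by simp)
      rw [abs_le] at habs
      simp only [Nat.cast_zero, sub_zero]
      omega
    | succ m ih =>
      intro hk
      have h1 : w ((n:ℤ) - (m+1:ℕ)) < w ((n:ℤ) - m) := by
        apply hmono <;> push_cast <;> omega
      have h2 := ih (by push_cast at hk ⊢; omega)
      push_cast at h1 h2 ⊢
      omega
  have hid : ∀ i : ℤ, 1 ≤ i → i ≤ n → w i = i := by
    intro i h1 h2
    have e1 : (1 + ((i - 1).toNat) : ℤ) = i := by omega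
    have e2 : ((n : ℤ) - ((n - i).toNat) : ℤ) = i := by omega
    have l1 := hlow (i-1).toNat (by omega)
    have l2 := hupp (n - i).toNat (by omega)
    rw [e1] at l1
    rw [e2] at l2
    omega
  ext i
  simp only [Equiv.Perm.one_apply]
  rcases lt_trichotomy i 0 with hi | hi | hi
  · by_cases hbig : (n : ℤ) < |i|
    · exact h.2 i hbig
    · push_neg at hbig
      rw [abs_le] at hbig
      have := hid (-i) (by omega) (by omega)
      have h2 := h.1 (-i)
      rw [this] at h2
      simpa using h2
  · rw [hi]; exact sp_zero h
  · by_cases hbig : (n : ℤ) < |i|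
    · exact h.2 i hbig
    · push_neg at hbig
      rw [abs_le] at hbig
      exact hid i (by omega) (by omega)


lemma finite_sp (n : ℕ) : (SignedPerms n).Finite := by
  classical
  set S := {x : ℤ // x ∈ Finset.Icc (-(n:ℤ)) (n:ℤ)} with hS
  have : Finite S := by infer_instance
  let e : Equiv.Perm ℤ → (S → S) := fun w s =>
    if h : (w (s : ℤ)) ∈ Finset.Icc (-(n:ℤ)) (n:ℤ) then ⟨w (s:ℤ), h⟩ else s
  apply Set.Finite.of_finite_image (f := e) (Set.toFinite _)
  intro w hw w' hw' he
  have key : ∀ s : S, w (s : ℤ) = w' (s : ℤ) := by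
    intro s
    have h1 : w (s:ℤ) ∈ Finset.Icc (-(n:ℤ)) (n:ℤ) := by
      rw [Finset.mem_Icc]
      have hs := s.2
      rw [Finset.mem_Icc] at hs
      have := sp_abs_le hw (show |(s:ℤ)| ≤ n by rw [abs_le]; omega)
      rw [abs_le] at this
      omega
    have h2 : w' (s:ℤ) ∈ Finset.Icc (-(n:ℤ)) (n:ℤ) := by
      rw [Finset.mem_Icc]
      have hs := s.2
      rw [Finset.mem_Icc] at hs
      have := sp_abs_le hw' (show |(s:ℤ)| ≤ n by rw [abs_le]; omega)
      rw [abs_le] at this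
      omega
    have := congrFun he s
    simp only [e, dif_pos h1, dif_pos h2] at this
    exact congrArg Subtype.val this
  ext i
  by_cases hbig : (n : ℤ) < |i|
  · rw [hw.2 i hbig, hw'.2 i hbig]
  · push_neg at hbig
    rw [abs_le] at hbig
    exact key ⟨i, by rw [Finset.mem_Icc]; omega⟩

noncomputable def BFin (n : ℕ) : Finset (Equiv.Perm ℤ) := (finite_sp n).toFinset

lemma mem_BFin {n : ℕ} {w : Equiv.Perm ℤ} : w ∈ BFin n ↔ IsSignedPerm n w := by
  rw [BFin, Set.Finite.mem_toFinset]; rfl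


def repFun (n : ℕ) (c : ℤ) : ℤ → ℤ := fun i =>
  if i = (n:ℤ) then c
  else if i = -(n:ℤ) then -c
  else if |c| ≤ i ∧ i ≤ (n:ℤ) - 1 then i + 1
  else if -((n:ℤ) - 1) ≤ i ∧ i ≤ -|c| then i - 1
  else i

def repInv (n : ℕ) (c : ℤ) : ℤ → ℤ := fun i =>
  if i = c then (n:ℤ)
  else if i = -c then -(n:ℤ)
  else if |c| + 1 ≤ i ∧ i ≤ (n:ℤ) then i - 1
  else if -(n:ℤ) ≤ i ∧ i ≤ -(|c|+1) then i + 1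
  else i

set_option maxHeartbeats 2000000 in
noncomputable def repPerm (n : ℕ) (c : ℤ) : Equiv.Perm ℤ :=
  if h : 1 ≤ |c| ∧ |c| ≤ (n:ℤ) then
    { toFun := repFun n c, invFun := repInv n c,
      left_inv := by
        intro i
        simp only [repFun, repInv]
        rcases abs_cases c with ⟨h1, h2⟩ | ⟨h1, h2⟩ <;> simp only [h1] at h ⊢ <;>
          split_ifs <;> omega,
      right_inv := by
        intro i
        simp only [repFun, repInv]
        rcases abs_cases c with ⟨h1, h2⟩ | ⟨h1, h2⟩ <;> simp only [h1] at h ⊢ <;>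
          split_ifs <;> omega }
  else 1

def lenT (n : ℕ) (c : ℤ) : ℕ := if 0 < c then ((n:ℤ) - c).toNat else ((n:ℤ) - c - 1).toNat

lemma repPerm_apply {n : ℕ} {c : ℤ} (h : 1 ≤ |c| ∧ |c| ≤ (n:ℤ)) (i : ℤ) :
    repPerm n c i = repFun n c i := by
  rw [repPerm, dif_pos h]; rfl


section Rep
variable {n : ℕ} {c : ℤ} (h : 1 ≤ |c| ∧ |c| ≤ (n:ℤ))
include h

lemma repFun_odd (x : ℤ) : repFun n c (-x) = -repFun n c x := by
  simp only [repFun]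
  rcases abs_cases c with ⟨h1, h2⟩ | ⟨h1, h2⟩ <;> rw [h1] at h ⊢ <;>
    split_ifs <;> omega

lemma repFun_mono {x y : ℤ} (hx : |x| ≤ (n:ℤ) - 1) (hy : |y| ≤ (n:ℤ) - 1) :
    repFun n c x < repFun n c y ↔ x < y := by
  rw [abs_le] at hx hy
  simp only [repFun]
  rcases abs_cases c with ⟨h1, h2⟩ | ⟨h1, h2⟩ <;> rw [h1] at h ⊢ <;>
    split_ifs <;> omega

lemma rep_sp : IsSignedPerm n (repPerm n c) := by
  constructor
  · intro i
    rw [repPerm_apply h, repPerm_apply h]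
    exact repFun_odd h i
  · intro i hi
    rw [repPerm_apply h]
    simp only [repFun]
    rcases abs_cases c with ⟨h1, h2⟩ | ⟨h1, h2⟩ <;> rw [h1] at h ⊢ <;>
      rcases abs_cases i with ⟨g1, g2⟩ | ⟨g1, g2⟩ <;> rw [g1] at hi <;>
      split_ifs <;> omega

lemma rep_apply_n : repPerm n c (n:ℤ) = c := by
  rw [repPerm_apply h]
  simp [repFun]

end Rep


section Rep2
open Finset
variable {n : ℕ} {c : ℤ} (h : 1 ≤ |c| ∧ |c| ≤ (n:ℤ))
include h

lemma repFun_zero : repFun n c 0 = 0 := by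
  simp only [repFun]
  rcases abs_cases c with ⟨h1, h2⟩ | ⟨h1, h2⟩ <;> rw [h1] at h ⊢ <;>
    split_ifs <;> omega

lemma repFun_sign {x : ℤ} (hx : |x| ≤ (n:ℤ) - 1) : repFun n c x < 0 ↔ x < 0 := by
  have h0 : |(0:ℤ)| ≤ (n:ℤ) - 1 := by rw [abs_le] at hx ⊢; omega
  have := repFun_mono h hx h0
  have h2 := repFun_mono h h0 hx
  rw [repFun_zero h] at this h2
  omega

lemma repFun_nsp {x y : ℤ} (hx : |x| ≤ (n:ℤ) - 1) (hy : |y| ≤ (n:ℤ) - 1) :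
    repFun n c x + repFun n c y < 0 ↔ x + y < 0 := by
  have hy' : |(-y)| ≤ (n:ℤ) - 1 := by rwa [abs_neg]
  have h1 := repFun_mono h hx hy'
  rw [repFun_odd h] at h1
  omega

lemma repFun_ind {x : ℤ} (hx1 : 1 ≤ |x|) (hx : |x| ≤ (n:ℤ) - 1) :
    ((if c < repFun n c x then 1 else 0) + (if repFun n c x + c < 0 then 1 else 0) : ℕ)
      = (if 0 < c then (if c ≤ |x| then 1 else 0) else (1 + if |x| < -c then 1 else 0)) := by
  simp only [repFun]
  rcases abs_cases c with ⟨h1, h2⟩ | ⟨h1, h2⟩ <;> simp only [h1] at h ⊢ <;>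
    rcases abs_cases x with ⟨g1, g2⟩ | ⟨g1, g2⟩ <;> simp only [g1] at hx1 hx ⊢ <;>
    split_ifs <;> omega

end Rep2

section Cnt
open Finset

lemma pair_split (B : Finset ℤ) (a : ℤ) (ha : a ∉ B) (hlt : ∀ i ∈ B, i < a)
    (R : ℤ → ℤ → Prop) [DecidableRel R] :
    (((insert a B) ×ˢ (insert a B)).filter (fun p => p.1 < p.2 ∧ R p.1 p.2)).card
      = ((B ×ˢ B).filter (fun p => p.1 < p.2 ∧ R p.1 p.2)).card
        + (B.filter (fun i => R i a)).card := by
  classical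
  have hset : ((insert a B) ×ˢ (insert a B)).filter (fun p => p.1 < p.2 ∧ R p.1 p.2)
      = ((B ×ˢ B).filter (fun p => p.1 < p.2 ∧ R p.1 p.2))
        ∪ (B.filter (fun i => R i a)).image (fun i => (i, a)) := by
    ext ⟨x, y⟩
    simp only [Finset.mem_filter, Finset.mem_product, Finset.mem_insert, Finset.mem_union,
      Finset.mem_image, Prod.mk.injEq]
    constructor
    · rintro ⟨⟨hx, hy⟩, hlt', hR⟩
      rcases hx with rfl | hx
      · rcases hy with rfl | hy
        · omega
        · exact absurd (hlt y hy) (by omega)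
      · rcases hy with rfl | hy
        · right; exact ⟨x, ⟨hx, hR⟩, rfl, rfl⟩
        · left; exact ⟨⟨hx, hy⟩, hlt', hR⟩
    · rintro (⟨⟨hx, hy⟩, hlt', hR⟩ | ⟨i, ⟨hi, hR⟩, rfl, rfl⟩)
      · exact ⟨⟨Or.inr hx, Or.inr hy⟩, hlt', hR⟩
      · exact ⟨⟨Or.inr hi, Or.inl rfl⟩, hlt i hi, hR⟩
  rw [hset, Finset.card_union_of_disjoint, Finset.card_image_of_injective]
  · intro p q hpq
    simpa using congrArg Prod.fst hpq
  · rw [Finset.disjoint_right]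
    rintro ⟨x, y⟩ hmem hmem2
    simp only [Finset.mem_image, Finset.mem_filter, Finset.mem_product, Prod.mk.injEq]
      at hmem hmem2
    obtain ⟨i, _, _, rfl⟩ := hmem
    exact ha hmem2.1.2

lemma sum_abs_reindex (m : ℕ) (v : Equiv.Perm ℤ) (hv : IsSignedPerm m v) (g : ℤ → ℕ) :
    ∑ i ∈ Icc (1:ℤ) (m:ℤ), g |v i| = ∑ k ∈ Icc (1:ℤ) (m:ℤ), g k := by
  apply Finset.sum_nbij' (i := fun i => |v i|) (j := fun k => |v⁻¹ k|)
  · intro a ha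
    rw [Finset.mem_Icc] at ha ⊢
    have h1 := sp_abs_le hv (show |a| ≤ m by rw [abs_le]; omega)
    have h2 := sp_ne_zero hv (show a ≠ 0 by omega)
    rcases abs_cases (v a) with ⟨e1, e2⟩ | ⟨e1, e2⟩ <;> omega
  · intro a ha
    rw [Finset.mem_Icc] at ha ⊢
    have h1 := sp_abs_le (sp_inv hv) (show |a| ≤ m by rw [abs_le]; omega)
    have h2 := sp_ne_zero (sp_inv hv) (show a ≠ 0 by omega)
    rcases abs_cases (v⁻¹ a) with ⟨e1, e2⟩ | ⟨e1, e2⟩ <;> omega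
  · intro a ha
    rw [Finset.mem_Icc] at ha
    rcases abs_cases (v a) with ⟨h1, _⟩ | ⟨h1, _⟩ <;> rw [h1]
    · simp only [Equiv.Perm.inv_def, Equiv.symm_apply_apply]
      exact abs_of_nonneg (by omega)
    · have : v⁻¹ (-(v a)) = -(v⁻¹ (v a)) := (sp_inv hv).1 (v a)
      rw [this]
      simp only [Equiv.Perm.inv_def, Equiv.symm_apply_apply, abs_neg]
      exact abs_of_nonneg (by omega)
  · intro a ha
    rw [Finset.mem_Icc] at ha
    rcases abs_cases (v⁻¹ a) with ⟨h1, _⟩ | ⟨h1, _⟩ <;> rw [h1]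
    · simp only [Equiv.Perm.inv_def, Equiv.apply_symm_apply]
      exact abs_of_nonneg (by omega)
    · rw [hv.1]
      simp only [Equiv.Perm.inv_def, Equiv.apply_symm_apply, abs_neg]
      exact abs_of_nonneg (by omega)
  · intro a ha
    rfl

end Cnt


section Main
open Finset

lemma len_rep_mul (n : ℕ) (c : ℤ) (h1c : 1 ≤ |c|) (h2c : |c| ≤ (n:ℤ)+1) (v : Equiv.Perm ℤ)
    (hv : IsSignedPerm n v) :
    len (n+1) (repPerm (n+1) c * v) = lenT (n+1) c + len n v := by
  classical
  have hcast : ((n+1 : ℕ) : ℤ) = (n:ℤ) + 1 := by push_cast; ring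
  have h' : 1 ≤ |c| ∧ |c| ≤ ((n+1:ℕ) : ℤ) := by rw [hcast]; exact ⟨h1c, h2c⟩
  set t := repPerm (n+1) c with ht
  set w := t * v with hw
  have hvn : v ((n:ℤ)+1) = (n:ℤ)+1 := hv.2 _ (by rw [abs_of_nonneg (by omega)]; omega)
  have hwsmall : ∀ i : ℤ, w i = repFun (n+1) c (v i) := fun i => by
    rw [hw, Equiv.Perm.mul_apply, ht, repPerm_apply h']
  have hwn : w ((n:ℤ)+1) = c := by
    rw [hwsmall, hvn]
    simp only [repFun, hcast]
    simp
  have hvb : ∀ i ∈ Icc (1:ℤ) (n:ℤ), 1 ≤ |v i| ∧ |v i| ≤ (n:ℤ) := by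
    intro i hi
    rw [mem_Icc] at hi
    have b1 := sp_abs_le hv (show |i| ≤ n by rw [abs_le]; omega)
    have b2 := sp_ne_zero hv (show i ≠ 0 by omega)
    rcases abs_cases (v i) with ⟨e1, e2⟩ | ⟨e1, e2⟩ <;> omega
  have hvb' : ∀ i ∈ Icc (1:ℤ) (n:ℤ), |v i| ≤ ((n+1:ℕ):ℤ) - 1 := by
    intro i hi
    have := (hvb i hi).2
    omega
  have hIcc : Icc (1:ℤ) (((n+1:ℕ)):ℤ) = insert ((n:ℤ)+1) (Icc (1:ℤ) (n:ℤ)) := by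
    ext i
    simp only [mem_Icc, mem_insert]
    omega
  have hnot : ((n:ℤ)+1) ∉ Icc (1:ℤ) (n:ℤ) := by simp only [mem_Icc]; omega
  -- Neg part
  have hNegInner : (Icc (1:ℤ) (n:ℤ)).filter (fun i => w i < 0) = NegSet n v := by
    rw [NegSet]
    apply Finset.filter_congr
    intro i hi
    rw [hwsmall]
    exact repFun_sign h' (hvb' i hi)
  have hNeg : (NegSet (n+1) w).card = (if c < 0 then 1 else 0) + (NegSet n v).card := by
    rw [NegSet, hIcc, Finset.filter_insert, hwn]
    by_cases hc : c < 0
    · rw [if_pos hc, if_pos hc, Finset.card_insert_of_notMem (fun hcon => hnot (Finset.mem_of_mem_filter _ hcon)), hNegInner]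
      omega
    · rw [if_neg hc, if_neg hc, hNegInner]
      omega
  -- Inv part
  have hInv : (InvSet (n+1) w).card
      = (InvSet n v).card + ((Icc (1:ℤ) (n:ℤ)).filter (fun i => c < w i)).card := by
    rw [InvSet, hIcc]
    rw [pair_split _ _ hnot (fun i hi => by rw [mem_Icc] at hi; omega) (fun x y => w y < w x)]
    have hInner : (Icc (1:ℤ) (n:ℤ) ×ˢ Icc (1:ℤ) (n:ℤ)).filter (fun p => p.1 < p.2 ∧ w p.2 < w p.1)
        = InvSet n v := by
      rw [InvSet]
      apply Finset.filter_congr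
      rintro ⟨i, j⟩ hij
      rw [Finset.mem_product] at hij
      simp only [eq_iff_iff, and_congr_right_iff]
      intro _
      rw [hwsmall, hwsmall]
      exact repFun_mono h' (hvb' j hij.2) (hvb' i hij.1)
    rw [hInner]
    simp only [hwn]
  -- Nsp part
  have hNsp : (NspSet (n+1) w).card
      = (NspSet n v).card + ((Icc (1:ℤ) (n:ℤ)).filter (fun i => w i + c < 0)).card := by
    rw [NspSet, hIcc]
    rw [pair_split _ _ hnot (fun i hi => by rw [mem_Icc] at hi; omega) (fun x y => w x + w y < 0)]
    have hInner : (Icc (1:ℤ) (n:ℤ) ×ˢ Icc (1:ℤ) (n:ℤ)).filter (fun p => p.1 < p.2 ∧ w p.1 + w p.2 < 0)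
        = NspSet n v := by
      rw [NspSet]
      apply Finset.filter_congr
      rintro ⟨i, j⟩ hij
      rw [Finset.mem_product] at hij
      simp only [eq_iff_iff, and_congr_right_iff]
      intro _
      rw [hwsmall, hwsmall]
      exact repFun_nsp h' (hvb' i hij.1) (hvb' j hij.2)
    rw [hInner]
    simp only [hwn]
  -- the new contribution
  have hKey : ((Icc (1:ℤ) (n:ℤ)).filter (fun i => c < w i)).card
      + ((Icc (1:ℤ) (n:ℤ)).filter (fun i => w i + c < 0)).card
      + (if c < 0 then 1 else 0) = lenT (n+1) c := by
    rw [Finset.card_filter, Finset.card_filter, ← Finset.sum_add_distrib]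
    have step1 : ∑ i ∈ Icc (1:ℤ) (n:ℤ),
        ((if c < w i then 1 else 0) + (if w i + c < 0 then 1 else 0))
        = ∑ i ∈ Icc (1:ℤ) (n:ℤ),
            (fun k : ℤ => if 0 < c then (if c ≤ k then 1 else 0) else (1 + if k < -c then 1 else 0)) |v i| := by
      apply Finset.sum_congr rfl
      intro i hi
      rw [hwsmall]
      exact repFun_ind h' (hvb i hi).1 (hvb' i hi)
    rw [step1,
      sum_abs_reindex n v hv (fun k : ℤ => if 0 < c then (if c ≤ k then 1 else 0) else (1 + if k < -c then 1 else 0))]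
    by_cases hc : 0 < c
    · have hg : ∀ k ∈ Icc (1:ℤ) (n:ℤ),
          (fun k : ℤ => if 0 < c then (if c ≤ k then 1 else 0) else (1 + if k < -c then 1 else 0)) k
            = (if c ≤ k then (1:ℕ) else 0) := by
        intro k _
        simp only [if_pos hc]
      rw [Finset.sum_congr rfl hg, ← Finset.card_filter]
      have : (Icc (1:ℤ) (n:ℤ)).filter (fun k => c ≤ k) = Icc c (n:ℤ) := by
        ext k
        simp only [mem_filter, mem_Icc]
        omega
      rw [this, Int.card_Icc, lenT, if_pos hc, if_neg (by omega)]
      omega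
    · have hcne : c < 0 := by rcases abs_cases c with ⟨e1,e2⟩|⟨e1,e2⟩ <;> omega
      have hcb : -c ≤ (n:ℤ)+1 := by rcases abs_cases c with ⟨e1,e2⟩|⟨e1,e2⟩ <;> omega
      have hg : ∀ k ∈ Icc (1:ℤ) (n:ℤ),
          (fun k : ℤ => if 0 < c then (if c ≤ k then 1 else 0) else (1 + if k < -c then 1 else 0)) k
            = (1 + if k < -c then (1:ℕ) else 0) := by
        intro k _
        simp only [if_neg hc]
      rw [Finset.sum_congr rfl hg, Finset.sum_add_distrib, Finset.sum_const, ← Finset.card_filter]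
      have : (Icc (1:ℤ) (n:ℤ)).filter (fun k => k < -c) = Icc (1:ℤ) (-c-1) := by
        ext k
        simp only [mem_filter, mem_Icc]
        omega
      rw [this, Int.card_Icc, Int.card_Icc, lenT, if_neg hc, if_pos hcne]
      simp only [smul_eq_mul, mul_one]
      omega
  -- assemble
  rw [len, len, hNeg, hInv, hNsp]
  omega

end Main


section Poincare
open Finset Polynomial

noncomputable def Wpoly (n : ℕ) : Polynomial ℤ := ∑ w ∈ BFin n, (X : Polynomial ℤ)^(len n w)

noncomputable def Cn (n : ℕ) : Finset ℤ := (Finset.Icc (-((n:ℤ)+1)) ((n:ℤ)+1)).erase 0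

lemma mem_Cn {n : ℕ} {c : ℤ} : c ∈ Cn n ↔ 1 ≤ |c| ∧ |c| ≤ (n:ℤ)+1 := by
  rw [Cn, Finset.mem_erase, Finset.mem_Icc]
  rcases abs_cases c with ⟨e1, e2⟩ | ⟨e1, e2⟩ <;> rw [e1] <;> omega

lemma sp_zero_iff (w : Equiv.Perm ℤ) (hw : IsSignedPerm 0 w) : w = 1 := by
  ext i
  rcases eq_or_ne i 0 with rfl | hi
  · simp [sp_zero hw]
  · have : (0:ℤ) < |i| := by rcases abs_cases i with ⟨e1,e2⟩|⟨e1,e2⟩ <;> omega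
    simpa using hw.2 i (by exact_mod_cast this)

lemma BFin_zero : BFin 0 = {1} := by
  ext w
  rw [mem_BFin, Finset.mem_singleton]
  constructor
  · exact sp_zero_iff w
  · rintro rfl; exact sp_one 0

lemma Wpoly_zero : Wpoly 0 = 1 := by
  rw [Wpoly, BFin_zero, Finset.sum_singleton, len_one, pow_zero]

lemma decomp_sp (n : ℕ) (w : Equiv.Perm ℤ) (hw : IsSignedPerm (n+1) w) :
    (1 ≤ |w ((n:ℤ)+1)| ∧ |w ((n:ℤ)+1)| ≤ (n:ℤ)+1) ∧
      IsSignedPerm n ((repPerm (n+1) (w ((n:ℤ)+1)))⁻¹ * w) := by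
  have hcast : ((n+1 : ℕ) : ℤ) = (n:ℤ) + 1 := by push_cast; ring
  have hc1 : 1 ≤ |w ((n:ℤ)+1)| := by
    have := sp_ne_zero hw (show ((n:ℤ)+1) ≠ 0 by omega)
    rcases abs_cases (w ((n:ℤ)+1)) with ⟨e1,e2⟩|⟨e1,e2⟩ <;> omega
  have hc2 : |w ((n:ℤ)+1)| ≤ (n:ℤ)+1 := by
    have := sp_abs_le hw (show |(n:ℤ)+1| ≤ ((n+1:ℕ):ℤ) by rw [abs_of_nonneg (by omega)]; omega)
    omega
  refine ⟨⟨hc1, hc2⟩, ?_⟩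
  have h' : 1 ≤ |w ((n:ℤ)+1)| ∧ |w ((n:ℤ)+1)| ≤ ((n+1:ℕ):ℤ) := by rw [hcast]; exact ⟨hc1, hc2⟩
  have hrep := rep_sp h'
  constructor
  · intro i
    simp only [Equiv.Perm.mul_apply]
    rw [hw.1, (sp_inv hrep).1]
  · intro i hi
    simp only [Equiv.Perm.mul_apply]
    rcases le_or_gt |i| ((n:ℤ)+1) with hle | hgt
    · have hin : i = (n:ℤ)+1 ∨ i = -((n:ℤ)+1) := by
        rcases abs_cases i with ⟨e1,e2⟩|⟨e1,e2⟩ <;> omega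
      have hrn : (repPerm (n+1) (w ((n:ℤ)+1)))⁻¹ (w ((n:ℤ)+1)) = (n:ℤ)+1 := by
        have h2 := rep_apply_n h'
        rw [hcast] at h2
        rw [Equiv.Perm.inv_def, Equiv.symm_apply_eq]
        exact h2.symm
      rcases hin with rfl | rfl
      · rw [hrn]
      · rw [hw.1, (sp_inv hrep).1, hrn]
    · rw [hw.2 i (by rw [hcast]; omega)]
      exact (sp_inv hrep).2 i (by rw [hcast]; omega)

lemma lenT_reindex (n : ℕ) :
    ∑ c ∈ Cn n, (X : Polynomial ℤ)^(lenT (n+1) c) = ∑ k ∈ range (2*n+2), (X : Polynomial ℤ)^k := by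
  have hcast : ((n+1 : ℕ) : ℤ) = (n:ℤ) + 1 := by push_cast; ring
  apply Finset.sum_nbij' (i := fun c => lenT (n+1) c)
    (j := fun k => if k ≤ n then ((n:ℤ)+1) - k else (n:ℤ) - k)
  · intro c hc
    rw [mem_Cn] at hc
    rw [Finset.mem_range, lenT, hcast]
    rcases abs_cases c with ⟨e1,e2⟩|⟨e1,e2⟩ <;> rw [e1] at hc <;> split_ifs <;> omega
  · intro k hk
    rw [Finset.mem_range] at hk
    rw [mem_Cn]
    split_ifs with hkn <;> constructor <;>
      first
        | (rw [abs_of_nonneg (by push_cast; omega)]; push_cast; omega)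
        | (rw [abs_of_nonpos (by push_cast; omega)]; push_cast; omega)
  · intro c hc
    rw [mem_Cn] at hc
    simp only [lenT, hcast]
    rcases abs_cases c with ⟨e1,e2⟩|⟨e1,e2⟩ <;> rw [e1] at hc <;> split_ifs <;> push_cast <;> omega
  · intro k hk
    rw [Finset.mem_range] at hk
    simp only [lenT, hcast]
    split_ifs <;> push_cast <;> omega
  · intro c hc
    rfl

lemma Wpoly_succ (n : ℕ) :
    Wpoly (n+1) = (∑ k ∈ range (2*n+2), (X : Polynomial ℤ)^k) * Wpoly n := by
  have hcast : ((n+1 : ℕ) : ℤ) = (n:ℤ) + 1 := by push_cast; ring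
  have key : Wpoly (n+1)
      = ∑ p ∈ (Cn n) ×ˢ (BFin n), (X : Polynomial ℤ)^(lenT (n+1) p.1 + len n p.2) := by
    rw [Wpoly]
    apply Finset.sum_nbij' (i := fun w => (w ((n:ℤ)+1), (repPerm (n+1) (w ((n:ℤ)+1)))⁻¹ * w))
      (j := fun p => repPerm (n+1) p.1 * p.2)
    · intro w hw
      rw [mem_BFin] at hw
      obtain ⟨hc, hv⟩ := decomp_sp n w hw
      rw [Finset.mem_product, mem_Cn, mem_BFin]
      exact ⟨hc, hv⟩
    · intro p hp
      rw [Finset.mem_product, mem_Cn] at hp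
      rw [mem_BFin]
      have h' : 1 ≤ |p.1| ∧ |p.1| ≤ ((n+1:ℕ):ℤ) := by rw [hcast]; exact hp.1
      exact sp_mul (rep_sp h') (sp_mono ((mem_BFin).1 hp.2) (by omega))
    · intro w hw
      exact mul_inv_cancel_left _ _
    · intro p hp
      rw [Finset.mem_product, mem_Cn, mem_BFin] at hp
      have h' : 1 ≤ |p.1| ∧ |p.1| ≤ ((n+1:ℕ):ℤ) := by rw [hcast]; exact hp.1
      have h1 : (repPerm (n+1) p.1 * p.2) ((n:ℤ)+1) = p.1 := by
        simp only [Equiv.Perm.mul_apply]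
        rw [hp.2.2 ((n:ℤ)+1) (by rw [abs_of_nonneg (by omega)]; omega)]
        have h2 := rep_apply_n h'
        rwa [hcast] at h2
      rw [Prod.mk.injEq]
      refine ⟨h1, ?_⟩
      rw [h1]
      exact inv_mul_cancel_left _ _
    · intro w hw
      rw [mem_BFin] at hw
      obtain ⟨hc, hv⟩ := decomp_sp n w hw
      have hlen := len_rep_mul n (w ((n:ℤ)+1)) hc.1 hc.2 _ hv
      rw [mul_inv_cancel_left] at hlen
      simp only [hlen]
  rw [key, Finset.sum_product, ← lenT_reindex n, Wpoly, Finset.sum_mul_sum]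
  exact Finset.sum_congr rfl fun c _ => Finset.sum_congr rfl fun v _ => pow_add _ _ _

lemma Wpoly_eq (n : ℕ) :
    Wpoly n = ∏ i ∈ range n, ∑ k ∈ range (2*i+2), (X : Polynomial ℤ)^k := by
  induction n with
  | zero => simpa using Wpoly_zero
  | succ m ih =>
    rw [Wpoly_succ, ih, Finset.prod_range_succ, mul_comm]

end Poincare


section Palindrome
open Finset Polynomial

lemma reverse_X_sub_C (a : ℂ) : (X - C a).reverse = 1 - C a * X := by
  ext k
  rw [Polynomial.coeff_reverse, Polynomial.natDegree_X_sub_C]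
  match k with
  | 0 => rw [Polynomial.revAt_le (by norm_num)]; simp
  | 1 => rw [Polynomial.revAt_le (by norm_num)]; simp [Polynomial.coeff_one]
  | (k+2) =>
    rw [Polynomial.revAt_eq_self_of_lt (by omega)]
    simp [Polynomial.coeff_one, Polynomial.coeff_X]

lemma reverse_multiset_prod (s : Multiset ℂ) :
    ((s.map (fun a => (X:ℂ[X]) - C a)).prod).reverse
      = (s.map (fun a => (1:ℂ[X]) - C a * X)).prod := by
  induction s using Multiset.induction_on with
  | empty =>
    simp only [Multiset.map_zero, Multiset.prod_zero]
    rw [show ((1:ℂ[X])) = C 1 from (Polynomial.C_1).symm, Polynomial.reverse_C]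
  | cons a s ih =>
    simp only [Multiset.map_cons, Multiset.prod_cons]
    have hm : ((s.map (fun a => (X:ℂ[X]) - C a)).prod).Monic :=
      monic_multiset_prod_of_monic _ _ (fun i _ => monic_X_sub_C i)
    rw [Polynomial.reverse_mul, reverse_X_sub_C, ih]
    rw [(monic_X_sub_C a).leadingCoeff, hm.leadingCoeff]
    norm_num

lemma palindrome_of_dvd (p : Polynomial ℤ) (hm : p.Monic) (h0 : p.coeff 0 = 1) (N : ℕ)
    (hdvd : p ∣ ∏ i ∈ range N, ((X:Polynomial ℤ)^(2*i+2) - 1)) :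
    ∀ k, k ≤ p.natDegree → p.coeff k = p.coeff (p.natDegree - k) := by
  intro k hk
  set φ := Int.castRingHom ℂ with hφ
  set q := p.map φ with hq
  have hqm : q.Monic := hm.map φ
  have hqdeg : q.natDegree = p.natDegree := hm.natDegree_map φ
  have hq0 : q.coeff 0 = 1 := by rw [hq, Polynomial.coeff_map, h0]; simp
  have hqne : q ≠ 0 := hqm.ne_zero
  -- all roots of q have norm 1
  have hnorm : ∀ r ∈ q.roots, ‖r‖₊ = 1 := by
    intro r hr
    have hroot : q.IsRoot r := (Polynomial.mem_roots'.1 hr).2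
    have hqdvd : q ∣ ∏ i ∈ range N, ((X:ℂ[X])^(2*i+2) - 1) := by
      have h2 := Polynomial.map_dvd φ hdvd
      rw [Polynomial.map_prod] at h2
      simpa using h2
    have hPr : (∏ i ∈ range N, ((X:ℂ[X])^(2*i+2) - 1)).eval r = 0 := by
      obtain ⟨c, hc⟩ := hqdvd
      rw [hc, Polynomial.eval_mul, show Polynomial.eval r q = 0 from hroot, zero_mul]
    rw [Polynomial.eval_prod] at hPr
    obtain ⟨i, _, hi⟩ := Finset.prod_eq_zero_iff.1 hPr
    simp only [Polynomial.eval_sub, Polynomial.eval_pow, Polynomial.eval_X,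
      Polynomial.eval_one, sub_eq_zero] at hi
    have hpow : ‖r‖₊ ^ (2*i+2) = 1 := by
      rw [← nnnorm_pow, hi, nnnorm_one]
    exact (pow_eq_one_iff_of_nonneg (by positivity) (by omega)).1 hpow
  have hconj : ∀ r ∈ q.roots, r⁻¹ = (starRingEnd ℂ) r := by
    intro r hr
    have h1 : ‖r‖₊ = 1 := hnorm r hr
    have hrne : r ≠ 0 := by
      intro h
      rw [h] at h1
      simp at h1
    have hmc : r * (starRingEnd ℂ) r = 1 := by
      rw [Complex.mul_conj]
      have : Complex.normSq r = 1 := by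
        have h2 : ‖r‖ = 1 := by
          have := congrArg (fun x : NNReal => (x:ℝ)) h1
          simpa using this
        rw [Complex.normSq_eq_norm_sq, h2]
        norm_num
      rw [this]
      norm_num
    exact inv_eq_of_mul_eq_one_right hmc
  have hfact : q = (q.roots.map (fun a => X - C a)).prod :=
    (IsAlgClosed.splits q).eq_prod_roots_of_monic hqm
  have hrev : q.reverse = q := by
    conv_lhs => rw [hfact]
    rw [reverse_multiset_prod]
    have step : ∀ r ∈ q.roots, (1:ℂ[X]) - C r * X = (-C r) * (X - C r⁻¹) := by
      intro r hr
      have hrne : r ≠ 0 := by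
        intro h
        have := hnorm r hr
        rw [h] at this
        simp at this
      have expand : (-C r) * (X - C r⁻¹) = -(C r * X) + C r * C r⁻¹ := by ring
      rw [expand, ← Polynomial.C_mul, mul_inv_cancel₀ hrne, Polynomial.C_1]
      ring
    rw [Multiset.map_congr rfl step, Multiset.prod_map_mul]
    have hc1 : (q.roots.map (fun r => -C r)).prod = 1 := by
      have e1 : (q.roots.map (fun r : ℂ => -C r)).prod
          = C ((q.roots.map (fun r : ℂ => -r)).prod) := by
        rw [map_multiset_prod (C : ℂ →+* ℂ[X])]
        rw [Multiset.map_map]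
        congr 1
        apply Multiset.map_congr rfl
        intro r _
        simp
      rw [e1]
      have e2 : (q.roots.map (fun r : ℂ => -r)).prod = q.eval 0 := by
        conv_rhs => rw [hfact]
        rw [Polynomial.eval_multiset_prod, Multiset.map_map]
        congr 1
        apply Multiset.map_congr rfl
        intro r _
        simp
      rw [e2, ← Polynomial.coeff_zero_eq_eval_zero, hq0]
      simp
    rw [hc1, one_mul]
    have e3 : (q.roots.map (fun r => X - C r⁻¹)).prod
        = (q.roots.map (fun r => X - C ((starRingEnd ℂ) r))).prod := by
      congr 1
      apply Multiset.map_congr rfl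
      intro r hr
      rw [hconj r hr]
    rw [e3]
    have e4 : (q.roots.map (fun r => X - C ((starRingEnd ℂ) r))).prod
        = q.map (starRingEnd ℂ) := by
      conv_rhs => rw [hfact]
      rw [Polynomial.map_multiset_prod, Multiset.map_map]
      congr 1
      apply Multiset.map_congr rfl
      intro r _
      simp
    rw [e4, hq, Polynomial.map_map]
    congr 1
    exact Subsingleton.elim _ _
  -- transfer
  have hC : q.coeff k = q.coeff (q.natDegree - k) := by
    conv_lhs => rw [← hrev]
    rw [Polynomial.coeff_reverse, Polynomial.revAt_le (by rw [hqdeg]; exact hk)]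
  rw [hq, Polynomial.coeff_map, Polynomial.coeff_map, hqdeg] at hC
  simp only [hφ, Int.coe_castRingHom] at hC
  exact_mod_cast hC

end Palindrome


section Final
open Finset Polynomial

lemma W_dvd_prod (n : ℕ) : Wpoly n ∣ ∏ i ∈ range n, ((X:Polynomial ℤ)^(2*i+2) - 1) := by
  have key : ∏ i ∈ range n, ((X:Polynomial ℤ)^(2*i+2) - 1) = (X-1)^n * Wpoly n := by
    rw [Wpoly_eq]
    rw [show ((X:Polynomial ℤ)-1)^n = ∏ _i ∈ range n, ((X:Polynomial ℤ)-1) by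
      rw [Finset.prod_const, Finset.card_range]]
    rw [← Finset.prod_mul_distrib]
    apply Finset.prod_congr rfl
    intro i _
    rw [mul_comm ((X:Polynomial ℤ) - 1), geom_sum_mul]
  rw [key]
  exact Dvd.intro_left _ rfl

variable {n : ℕ} {u x : Equiv.Perm ℤ}

lemma interval_finite (n : ℕ) (u : Equiv.Perm ℤ) : (IntervalR n u).Finite :=
  (finite_sp n).subset (fun x hx => hx.1)

lemma genquot_finite (n : ℕ) (U : Set (Equiv.Perm ℤ)) : (GenQuot n U).Finite :=
  (finite_sp n).subset (fun x hx => hx.1)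

noncomputable def UF (n : ℕ) (u : Equiv.Perm ℤ) : Finset (Equiv.Perm ℤ) :=
  (interval_finite n u).toFinset

noncomputable def XF (n : ℕ) (u : Equiv.Perm ℤ) : Finset (Equiv.Perm ℤ) :=
  (genquot_finite n (IntervalR n u)).toFinset

lemma mem_UF : x ∈ UF n u ↔ x ∈ IntervalR n u := Set.Finite.mem_toFinset _
lemma mem_XF : x ∈ XF n u ↔ x ∈ GenQuot n (IntervalR n u) := Set.Finite.mem_toFinset _

noncomputable def Upoly (n : ℕ) (u : Equiv.Perm ℤ) : Polynomial ℤ :=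
  ∑ x ∈ UF n u, (X:Polynomial ℤ)^(len n x)

noncomputable def Xpoly (n : ℕ) (u : Equiv.Perm ℤ) : Polynomial ℤ :=
  ∑ x ∈ XF n u, (X:Polynomial ℤ)^(len n x)

lemma W_factor (hsplit : IsSplitting n (GenQuot n (IntervalR n u)) (IntervalR n u)) :
    Wpoly n = Xpoly n u * Upoly n u := by
  classical
  rw [Xpoly, Upoly, Finset.sum_mul_sum, Wpoly, ← Finset.sum_product']
  symm
  apply Finset.sum_bij (i := fun p _ => p.1 * p.2)
  · intro p hp
    rw [Finset.mem_product, mem_XF, mem_UF] at hp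
    rw [mem_BFin]
    exact hsplit.2.1 (Set.mem_prod.2 hp)
  · intro p1 hp1 p2 hp2 heq
    rw [Finset.mem_product, mem_XF, mem_UF] at hp1 hp2
    exact hsplit.2.2.1 (Set.mem_prod.2 hp1) (Set.mem_prod.2 hp2) heq
  · intro w hw
    rw [mem_BFin] at hw
    obtain ⟨p, hp, he⟩ := hsplit.2.2.2 (show w ∈ SignedPerms n from hw)
    rw [Set.mem_prod] at hp
    refine ⟨p, ?_, he⟩
    rw [Finset.mem_product, mem_XF, mem_UF]
    exact hp
  · intro p hp
    rw [Finset.mem_product, mem_XF, mem_UF] at hp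
    rw [← pow_add, hsplit.1 p.1 hp.1 p.2 hp.2]

lemma u_mem_UF (hu : IsSignedPerm n u) : u ∈ UF n u := by
  rw [mem_UF]
  refine ⟨hu, ?_⟩
  rw [leR, inv_mul_cancel, len_one]
  omega

lemma one_mem_UF : (1 : Equiv.Perm ℤ) ∈ UF n u := by
  rw [mem_UF]
  refine ⟨sp_one n, ?_⟩
  rw [leR, inv_one, one_mul, len_one]
  omega

lemma len_le_of_mem_UF (hx : x ∈ UF n u) : len n x ≤ len n u := by
  rw [mem_UF] at hx
  have := hx.2
  rw [leR] at this
  omega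

lemma eq_u_of_top (hu : IsSignedPerm n u) (hx : x ∈ UF n u) (hl : len n x = len n u) : x = u := by
  rw [mem_UF] at hx
  have h2 := hx.2
  rw [leR] at h2
  have h3 : len n (x⁻¹ * u) = 0 := by omega
  have h4 : x⁻¹ * u = 1 := len_eq_zero (sp_mul (sp_inv hx.1) hu) h3
  exact (inv_mul_eq_one.1 h4)

lemma eq_one_of_bot (hx : x ∈ UF n u) (hl : len n x = 0) : x = 1 := by
  rw [mem_UF] at hx
  exact len_eq_zero hx.1 hl

lemma coeff_Upoly (d : ℕ) :
    (Upoly n u).coeff d = (((UF n u).filter (fun x => len n x = d)).card : ℤ) := by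
  classical
  rw [Upoly, Polynomial.finset_sum_coeff]
  simp only [Polynomial.coeff_X_pow]
  rw [Finset.sum_boole]
  have : (UF n u).filter (fun x => d = len n x) = (UF n u).filter (fun x => len n x = d) := by
    apply Finset.filter_congr
    intro x _
    exact eq_comm
  rw [this]

lemma coeff_top (hu : IsSignedPerm n u) : (Upoly n u).coeff (len n u) = 1 := by
  classical
  rw [coeff_Upoly]
  have : (UF n u).filter (fun x => len n x = len n u) = {u} := by
    ext x
    rw [Finset.mem_filter, Finset.mem_singleton]
    constructor
    · rintro ⟨h1, h2⟩
      exact eq_u_of_top hu h1 h2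
    · rintro rfl
      exact ⟨u_mem_UF hu, rfl⟩
  rw [this]
  simp

lemma coeff_bot (hu : IsSignedPerm n u) : (Upoly n u).coeff 0 = 1 := by
  classical
  rw [coeff_Upoly]
  have : (UF n u).filter (fun x => len n x = 0) = {1} := by
    ext x
    rw [Finset.mem_filter, Finset.mem_singleton]
    constructor
    · rintro ⟨h1, h2⟩
      exact eq_one_of_bot h1 h2
    · rintro rfl
      exact ⟨one_mem_UF, len_one n⟩
  rw [this]
  simp

lemma Upoly_deg (hu : IsSignedPerm n u) : (Upoly n u).natDegree = len n u := by
  apply le_antisymm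
  · rw [Upoly]
    apply Polynomial.natDegree_sum_le_of_forall_le
    intro x hx
    rw [Polynomial.natDegree_X_pow]
    exact len_le_of_mem_UF hx
  · apply Polynomial.le_natDegree_of_ne_zero
    rw [coeff_top hu]
    norm_num

lemma Upoly_monic (hu : IsSignedPerm n u) : (Upoly n u).Monic := by
  rw [Polynomial.Monic, Polynomial.leadingCoeff, Upoly_deg hu, coeff_top hu]

lemma rankCountR_eq (d : ℕ) [DecidablePred fun x => len n x = d] :
    rankCountR n u d = ((UF n u).filter (fun x => len n x = d)).card := by
  rw [rankCountR]
  have : {x | x ∈ IntervalR n u ∧ len n x = d} = ↑((UF n u).filter (fun x => len n x = d)) := by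
    ext x
    simp only [Set.mem_setOf_eq, Finset.coe_filter, mem_UF]
  rw [this, Set.ncard_coe_finset]

theorem main (hu : IsSignedPerm n u)
    (hsplit : IsSplitting n (GenQuot n (IntervalR n u)) (IntervalR n u)) :
    ∀ d : ℕ, d ≤ len n u → rankCountR n u d = rankCountR n u (len n u - d) := by
  classical
  intro d hd
  have hdvd : Upoly n u ∣ ∏ i ∈ range n, ((X:Polynomial ℤ)^(2*i+2) - 1) :=
    dvd_trans (Dvd.intro_left (Xpoly n u) (W_factor hsplit).symm) (W_dvd_prod n)
  have hpal := palindrome_of_dvd (Upoly n u) (Upoly_monic hu) (coeff_bot hu) n hdvd d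
    (by rw [Upoly_deg hu]; exact hd)
  rw [Upoly_deg hu, coeff_Upoly, coeff_Upoly] at hpal
  rw [rankCountR_eq, rankCountR_eq]
  exact_mod_cast hpal

end Final

end SPAux

/-- If `(B_n/U, U)` with `U = [e,u]_R` is a splitting of `B_n`,
then `U` is rank-symmetric. -/
theorem splitting_implies_rank_symmetric (n : ℕ) (u : Equiv.Perm ℤ) (hu : IsSignedPerm n u)
    (hsplit : IsSplitting n (GenQuot n (IntervalR n u)) (IntervalR n u)) :
    ∀ d : ℕ, d ≤ len n u → rankCountR n u d = rankCountR n u (len n u - d) :=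
  SPAux.main hu hsplit
end
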